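/- arXiv:1805.07338 — 10 statements merged into one kernel-verified Lean document; each statement's English description precedes it below -/
import Mathlib

section
/- Let m, t be positive integers and let a_1, …, a_m be positive integers with a_i ≤ ⌈t/2⌉ for each i and a_1 + … + a_m ≤ t. Then there is a partition of {1,…,m} into three (possibly empty) sets I_1, I_2, I_3 such that the sums s_j = Σ_{i∈I_j} a_i satisfy s_3 ≤ s_2 ≤ s_1 ≤ ⌈t/2⌉. -/
/-- Positive integers `a₁, …, a_m`, each at most `⌈t/2⌉`, with total sum at most `t`,
can be partitioned into three groups with sums `s₃ ≤ s₂ ≤ s₁ ≤ ⌈t/2⌉`. -/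
theorem exists_three_partition (m t : ℕ) (hm : 0 < m) (ht : 0 < t)
    (a : Fin m → ℕ) (hpos : ∀ i, 0 < a i) (hle : ∀ i, a i ≤ (t + 1) / 2)
    (hsum : ∑ i, a i ≤ t) :
    ∃ I₁ I₂ I₃ : Finset (Fin m),
      Disjoint I₁ I₂ ∧ Disjoint I₁ I₃ ∧ Disjoint I₂ I₃ ∧
      I₁ ∪ I₂ ∪ I₃ = Finset.univ ∧
      ∑ i ∈ I₃, a i ≤ ∑ i ∈ I₂, a i ∧
      ∑ i ∈ I₂, a i ≤ ∑ i ∈ I₁, a i ∧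
      ∑ i ∈ I₁, a i ≤ (t + 1) / 2 := by
  set c := (t + 1) / 2 with hc
  -- for any ground set R and bound b, there is a maximum-sum subset of R with sum ≤ b
  have key : ∀ (R : Finset (Fin m)) (b : ℕ), ∃ I, I ⊆ R ∧ ∑ i ∈ I, a i ≤ b ∧
      ∀ J, J ⊆ R → ∑ i ∈ J, a i ≤ b → ∑ i ∈ J, a i ≤ ∑ i ∈ I, a i := by
    intro R b
    have hne : (R.powerset.filter (fun I => ∑ i ∈ I, a i ≤ b)).Nonempty :=
      ⟨∅, by simp⟩
    obtain ⟨I, hI, hmax⟩ :=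
      Finset.exists_max_image _ (fun I => ∑ i ∈ I, a i) hne
    simp only [Finset.mem_filter, Finset.mem_powerset] at hI
    refine ⟨I, hI.1, hI.2, fun J hJ hJb => ?_⟩
    exact hmax J (by simp [Finset.mem_filter, Finset.mem_powerset, hJ, hJb])
  obtain ⟨I₁, -, hs1, hmax1⟩ := key Finset.univ c
  obtain ⟨I₂, hI2R, hs21, hmax2⟩ := key (Finset.univ \ I₁) (∑ i ∈ I₁, a i)
  set I₃ : Finset (Fin m) := (Finset.univ \ I₁) \ I₂ with hI3
  have hd12 : Disjoint I₁ I₂ := by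
    rw [Finset.disjoint_left]
    intro x hx1 hx2
    exact (Finset.mem_sdiff.mp (hI2R hx2)).2 hx1
  have hd13 : Disjoint I₁ I₃ := by
    rw [Finset.disjoint_left]
    intro x hx1 hx3
    exact (Finset.mem_sdiff.mp (Finset.mem_sdiff.mp hx3).1).2 hx1
  have hd23 : Disjoint I₂ I₃ := Finset.sdiff_disjoint.symm
  have hunion23 : I₂ ∪ I₃ = Finset.univ \ I₁ := Finset.union_sdiff_of_subset hI2R
  have hunion : I₁ ∪ I₂ ∪ I₃ = Finset.univ := by
    rw [Finset.union_assoc, hunion23,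
      Finset.union_sdiff_of_subset (Finset.subset_univ I₁)]
  -- total sum decomposition
  have hsum23 : ∑ i ∈ I₂, a i + ∑ i ∈ I₃, a i = ∑ i ∈ Finset.univ \ I₁, a i := by
    rw [← Finset.sum_union hd23, hunion23]
  have hsum123 : ∑ i ∈ I₁, a i + ∑ i ∈ I₂, a i + ∑ i ∈ I₃, a i = ∑ i, a i := by
    have := Finset.sum_sdiff (Finset.subset_univ I₁) (f := a)
    omega
  have ht2c : t ≤ 2 * c := by omega
  -- every element of I₃ has a i ≤ s₂ and s₂ + a i ≥ c + 1
  have hx2 : ∀ x ∈ I₃, a x ≤ ∑ i ∈ I₂, a i := by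
    intro x hx
    have hxR : x ∈ Finset.univ \ I₁ := (Finset.mem_sdiff.mp hx).1
    have h1 : a x ≤ ∑ i ∈ I₁, a i := by
      have := hmax1 {x} (Finset.subset_univ _) (by simpa using hle x)
      simpa using this
    have := hmax2 {x} (Finset.singleton_subset_iff.mpr hxR) (by simpa using h1)
    simpa using this
  have hbig : ∀ x ∈ I₃, c + 1 ≤ ∑ i ∈ I₂, a i + a x := by
    intro x hx
    by_contra h
    push_neg at h
    have hxR : x ∈ Finset.univ \ I₁ := (Finset.mem_sdiff.mp hx).1
    have hxn2 : x ∉ I₂ := (Finset.mem_sdiff.mp hx).2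
    have hsumins : ∑ i ∈ insert x I₂, a i = a x + ∑ i ∈ I₂, a i :=
      Finset.sum_insert hxn2
    have hle1 : ∑ i ∈ insert x I₂, a i ≤ ∑ i ∈ I₁, a i := by
      apply hmax1 _ (Finset.subset_univ _)
      omega
    have := hmax2 (insert x I₂) (Finset.insert_subset hxR hI2R) hle1
    have := hpos x
    omega
  -- I₃ has at most one element
  have hcard : ∀ x ∈ I₃, ∀ y ∈ I₃, x = y := by
    intro x hx y hy
    by_contra hxy
    have hpair : ({x, y} : Finset (Fin m)) ⊆ I₃ := by
      intro z hz
      simp only [Finset.mem_insert, Finset.mem_singleton] at hz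
      rcases hz with rfl | rfl <;> assumption
    have hsp : a x + a y ≤ ∑ i ∈ I₃, a i := by
      have := Finset.sum_le_sum_of_subset hpair (f := a)
      rwa [Finset.sum_pair hxy] at this
    have h1 := hbig x hx
    have h2 := hbig y hy
    omega
  rcases I₃.eq_empty_or_nonempty with h3e | ⟨x, hx⟩
  · refine ⟨I₁, I₂, I₃, hd12, hd13, hd23, hunion, ?_, hs21, hs1⟩
    simp [h3e]
  · have h3x : I₃ = {x} :=
      Finset.eq_singleton_iff_unique_mem.mpr ⟨hx, fun y hy => hcard y hy x hx⟩
    refine ⟨I₁, I₂, I₃, hd12, hd13, hd23, hunion, ?_, hs21, hs1⟩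
    rw [h3x, Finset.sum_singleton]
    exact hx2 x hx
end

section
/- Let m, t be positive integers and let a_1, …, a_m be positive integers with a_i ≤ ⌈t/2⌉ for each i and Σ a_i ≤ t. If I_1, I_2, I_3 is a partition of {1,…,m} such that I_1 maximizes Σ_{i∈I_1} a_i subject to Σ_{i∈I_1} a_i ≤ ⌈t/2⌉, and I_2 ⊆ {1,…,m}\I_1 maximizes Σ_{i∈I_2} a_i subject to Σ_{i∈I_2} a_i ≤ ⌈t/2⌉, and I_3 is the complement of I_1 ∪ I_2, then |I_3| ≤ 1. -/
/-- If `I₁` is a subset of maximum sum subject to its sum being at most `⌈t/2⌉`,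
`I₂ ⊆ I₁ᶜ` is a subset of `I₁ᶜ` of maximum sum subject to its sum being at most `⌈t/2⌉`,
and `I₃` is the complement of `I₁ ∪ I₂`, then `|I₃| ≤ 1`. -/
theorem third_set_small (m t : ℕ) (hm : 0 < m) (ht : 0 < t)
    (a : Fin m → ℕ) (hpos : ∀ i, 0 < a i) (hle : ∀ i, a i ≤ (t + 1) / 2)
    (hsum : ∑ i, a i ≤ t)
    (I₁ I₂ I₃ : Finset (Fin m))
    (hI1le : ∑ i ∈ I₁, a i ≤ (t + 1) / 2)
    (hI1max : ∀ J : Finset (Fin m), ∑ i ∈ J, a i ≤ (t + 1) / 2 →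
      ∑ i ∈ J, a i ≤ ∑ i ∈ I₁, a i)
    (hI2sub : I₂ ⊆ I₁ᶜ)
    (hI2le : ∑ i ∈ I₂, a i ≤ (t + 1) / 2)
    (hI2max : ∀ J : Finset (Fin m), J ⊆ I₁ᶜ → ∑ i ∈ J, a i ≤ (t + 1) / 2 →
      ∑ i ∈ J, a i ≤ ∑ i ∈ I₂, a i)
    (hI3 : I₃ = (I₁ ∪ I₂)ᶜ) :
    I₃.card ≤ 1 := by
  by_contra h
  push_neg at h
  obtain ⟨j, hj, k, hk, hjk⟩ := Finset.one_lt_card.mp h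
  rw [hI3, Finset.mem_compl, Finset.mem_union] at hj hk
  push_neg at hj hk
  have hj1 : j ∉ I₁ := hj.1
  have hj2 : j ∉ I₂ := hj.2
  have hk1 : k ∉ I₁ := hk.1
  have hk2 : k ∉ I₂ := hk.2
  -- I₁ can't absorb j
  have h1 : (t + 1) / 2 < ∑ i ∈ I₁, a i + a j := by
    by_contra hcon
    push_neg at hcon
    have := hI1max (insert j I₁) (by rwa [Finset.sum_insert hj1, Nat.add_comm])
    rw [Finset.sum_insert hj1] at this
    have := hpos j
    omega
  -- I₂ can't absorb k
  have h2 : (t + 1) / 2 < ∑ i ∈ I₂, a i + a k := by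
    by_contra hcon
    push_neg at hcon
    have hsub : insert k I₂ ⊆ I₁ᶜ := by
      intro x hx
      rcases Finset.mem_insert.mp hx with rfl | hx
      · exact Finset.mem_compl.mpr hk1
      · exact hI2sub hx
    have := hI2max (insert k I₂) hsub (by rwa [Finset.sum_insert hk2, Nat.add_comm])
    rw [Finset.sum_insert hk2] at this
    have := hpos k
    omega
  -- total sum bound
  have hdisj : Disjoint I₁ I₂ := by
    rw [Finset.disjoint_right]
    intro x hx
    exact Finset.mem_compl.mp (hI2sub hx)
  have hdisj' : Disjoint (I₁ ∪ I₂) {j, k} := by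
    rw [Finset.disjoint_right]
    intro x hx
    simp only [Finset.mem_insert, Finset.mem_singleton] at hx
    rcases hx with rfl | rfl <;> simp [Finset.mem_union, hj1, hj2, hk1, hk2]
  have hjksum : ∑ i ∈ ({j, k} : Finset (Fin m)), a i = a j + a k := by
    rw [Finset.sum_pair hjk]
  have htot : ∑ i ∈ I₁, a i + ∑ i ∈ I₂, a i + (a j + a k) ≤ t := by
    have h1' : ∑ i ∈ (I₁ ∪ I₂) ∪ {j, k}, a i ≤ ∑ i, a i :=
      Finset.sum_le_sum_of_subset (Finset.subset_univ _)
    rw [Finset.sum_union hdisj', Finset.sum_union hdisj, hjksum] at h1'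
    omega
  omega
end

section
/- For every graph H there exist an independent set I, a matching M, and a family Γ of pairwise vertex-disjoint triangles, all pairwise vertex-disjoint from each other, such that V(H) = I ∪ V(M) ∪ V(Γ), and there is a partition V(M) = V_1 ∪ V_2 such that every edge of M has one endpoint in V_1 and one in V_2, and every neighbour of every vertex of I lies in V_1. -/
/-!
Take a matching `M` whose vertex set is maximal under inclusion among all matchings. It admits no
augmenting path of length one or three: the vertices outside `M` are independent, and two
distinct vertices outside `M` are never adjacent to the two different ends of an edge of `M`.
So if a vertex `x` outside `M` is adjacent to both ends of an edge `ab` of `M` (an apex), it is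
the only vertex outside `M` adjacent to `a` or `b`. Choosing one such edge for every apex gives
disjoint triangles; deleting them from `M` leaves a matching on which at most one end of every
edge has a neighbour among the remaining vertices `I` outside `M`, and that end goes to `V₁`.
-/

namespace SimpleGraph.Subgraph

variable {V : Type*} {G : SimpleGraph V} {M : G.Subgraph} {s : Set V} {a b u v x y z a' b' x' : V}

lemma IsMatching.deleteVerts (hM : M.IsMatching) (hs : ∀ ⦃u v⦄, M.Adj u v → u ∈ s → v ∈ s) :
    (M.deleteVerts s).IsMatching := by
  intro v hv
  rw [deleteVerts_verts] at hv
  obtain ⟨w, hvw, huniq⟩ := hM hv.1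
  exact ⟨w, deleteVerts_adj.2 ⟨hv.1, hv.2, hvw.snd_mem, fun hw => hv.2 (hs hvw.symm hw), hvw⟩,
    fun w' h => huniq w' (deleteVerts_adj.1 h).2.2.2.2⟩

lemma IsMatching.exists_bipartition (hM : M.IsMatching) {S : Set V} (hS : S ⊆ M.verts)
    (hS' : ∀ ⦃u v⦄, M.Adj u v → u ∈ S → v ∉ S) :
    ∃ V₁ V₂ : Set V, S ⊆ V₁ ∧ V₁ ∪ V₂ = M.verts ∧ Disjoint V₁ V₂ ∧
      ∀ ⦃u v⦄, M.Adj u v → (u ∈ V₁ ∧ v ∈ V₂) ∨ (u ∈ V₂ ∧ v ∈ V₁) := by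
  let r := @WellOrderingRel V
  let V₁ := {u | ∃ v, M.Adj u v ∧ (u ∈ S ∨ (v ∉ S ∧ r u v))}
  have mem_V₁ : ∀ ⦃u v⦄, M.Adj u v → (u ∈ V₁ ↔ u ∈ S ∨ (v ∉ S ∧ r u v)) := fun u v huv =>
    ⟨fun ⟨w, huw, h⟩ => hM.eq_of_adj_left huw huv ▸ h, fun h => ⟨v, huv, h⟩⟩
  have hV₁ : V₁ ⊆ M.verts := fun u ⟨_, huv, _⟩ => huv.fst_mem
  refine ⟨V₁, M.verts \ V₁, fun u hu => ?_, Set.union_sdiff_cancel hV₁,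
    Set.disjoint_sdiff_right, fun u v huv => ?_⟩
  · obtain ⟨v, huv, -⟩ := hM (hS hu)
    exact ⟨v, huv, .inl hu⟩
  · have hne := huv.ne
    have htri := trichotomous_of r u v
    have hasymm : r u v → ¬ r v u := asymm_of r
    have hu := hS' huv
    have hv := hS' huv.symm
    simp only [Set.mem_sdiff, mem_V₁ huv, mem_V₁ huv.symm, huv.fst_mem, huv.snd_mem, true_and]
    tauto

lemma exists_maximalFor_isMatching_verts [Finite V] (G : SimpleGraph V) :
    ∃ M : G.Subgraph, MaximalFor IsMatching verts M :=
  (Set.toFinite {M : G.Subgraph | M.IsMatching}).exists_maximalFor verts _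
    ⟨⊥, fun _ hv => hv.elim⟩

lemma IsMatching.sup_subgraphOfAdj (hM : M.IsMatching) (hxy : G.Adj x y) (hx : x ∉ M.verts)
    (hy : y ∉ M.verts) : (M ⊔ G.subgraphOfAdj hxy).IsMatching :=
  hM.sup (.subgraphOfAdj hxy) <| by
    rw [hM.support_eq_verts, (IsMatching.subgraphOfAdj hxy).support_eq_verts, subgraphOfAdj_verts]
    exact Set.disjoint_left.2 fun v hv hv' => by rcases hv' with rfl | rfl <;> contradiction

lemma not_adj_of_notMem_verts (hM : MaximalFor IsMatching verts M) (hx : x ∉ M.verts)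
    (hy : y ∉ M.verts) : ¬ G.Adj x y := fun hxy =>
  hx (hM.2 (hM.1.sup_subgraphOfAdj hxy hx hy) Set.subset_union_left (by simp))

lemma eq_of_adj_of_adj (hM : MaximalFor IsMatching verts M) (hab : M.Adj a b)
    (hx : x ∉ M.verts) (hy : y ∉ M.verts) (hxa : G.Adj x a) (hyb : G.Adj y b) : x = y := by
  by_contra hxy
  have hdel : (M.deleteVerts {a, b}).IsMatching := hM.1.deleteVerts fun u v huv hu => by
    rcases hu with rfl | rfl
    · simp [hM.1.eq_of_adj_left huv hab]
    · simp [hM.1.eq_of_adj_left huv hab.symm]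
  have hya : y ≠ a := fun h => hy (h ▸ hab.fst_mem)
  have hbx : b ≠ x := fun h => hx (h ▸ hab.snd_mem)
  have hM' := (hdel.sup_subgraphOfAdj hxa (by simp [hx]) (by simp)).sup_subgraphOfAdj hyb
    (by simp [hy, hya, Ne.symm hxy]) (by simp [hab.ne.symm, hbx])
  refine hx (hM.2 hM' (fun v hv => ?_) (by simp))
  by_cases hva : v = a <;> by_cases hvb : v = b <;> simp [hv, hva, hvb]

variable (M) in
def IsApex (x a b : V) : Prop :=
  x ∉ M.verts ∧ M.Adj a b ∧ G.Adj x a ∧ G.Adj x b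

section Triangles

variable [DecidableEq V] {Γ : Finset (Finset V)}

lemma IsApex.eq_of_adj (hM : MaximalFor IsMatching verts M) (h : M.IsApex x a b)
    (hz : z ∉ M.verts) (hzv : G.Adj z v) (hv : v ∈ ({x, a, b} : Finset V)) : z = x := by
  obtain ⟨hx, hab, hxa, hxb⟩ := h
  simp only [Finset.mem_insert, Finset.mem_singleton] at hv
  rcases hv with rfl | rfl | rfl
  · exact (not_adj_of_notMem_verts hM hz hx hzv).elim
  · exact eq_of_adj_of_adj hM hab hz hx hzv hxb
  · exact (eq_of_adj_of_adj hM hab hx hz hxa hzv).symm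

lemma IsApex.mem_of_adj (hM : M.IsMatching) (h : M.IsApex x a b) (huv : M.Adj u v)
    (hu : u ∈ ({x, a, b} : Finset V)) : v ∈ ({x, a, b} : Finset V) := by
  obtain ⟨hx, hab, -, -⟩ := h
  simp only [Finset.mem_insert, Finset.mem_singleton] at hu ⊢
  rcases hu with rfl | rfl | rfl
  · exact (hx huv.fst_mem).elim
  · exact .inr (.inr (hM.eq_of_adj_left huv hab))
  · exact .inr (.inl (hM.eq_of_adj_left huv hab.symm))

lemma IsApex.eq_of_mem_of_mem (hM : MaximalFor IsMatching verts M) (h : M.IsApex x a b)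
    (h' : M.IsApex x' a' b') (hv : v ∈ ({x, a, b} : Finset V))
    (hv' : v ∈ ({x', a', b'} : Finset V)) : x = x' := by
  by_cases hvM : v ∈ M.verts
  · have hxv : G.Adj x v := by
      simp only [Finset.mem_insert, Finset.mem_singleton] at hv
      rcases hv with rfl | rfl | rfl
      exacts [(h.1 hvM).elim, h.2.2.1, h.2.2.2]
    exact h'.eq_of_adj hM h.1 hxv hv'
  · have := h.2.1.fst_mem; have := h.2.1.snd_mem
    have := h'.2.1.fst_mem; have := h'.2.1.snd_mem
    simp only [Finset.mem_insert, Finset.mem_singleton] at hv hv'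
    grind

variable (M Γ) in
structure IsApexTrianglePacking : Prop where
  exists_isApex : ∀ s ∈ Γ, ∃ x a b, s = {x, a, b} ∧ M.IsApex x a b
  pairwise_disjoint : ∀ s ∈ Γ, ∀ s' ∈ Γ, s ≠ s' → Disjoint s s'
  exists_mem : ∀ x a b, M.IsApex x a b → ∃ s ∈ Γ, x ∈ s

lemma exists_isApexTrianglePacking [Fintype V] (hM : MaximalFor IsMatching verts M) :
    ∃ Γ, M.IsApexTrianglePacking Γ := by
  classical
  choose! a b hab using fun x (hx : ∃ a b, M.IsApex x a b) => hx
  let X := Finset.univ.filter fun x => ∃ a b, M.IsApex x a b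
  refine ⟨X.image fun x => {x, a x, b x}, ⟨?_, ?_, ?_⟩⟩
  · simp only [Finset.mem_image]
    rintro _ ⟨x, hx, rfl⟩
    exact ⟨x, a x, b x, rfl, hab x (Finset.mem_filter.1 hx).2⟩
  · simp only [Finset.mem_image]
    rintro _ ⟨x, hx, rfl⟩ _ ⟨x', hx', rfl⟩ hne
    refine Finset.disjoint_left.2 fun v hv hv' => hne ?_
    rw [(hab x (Finset.mem_filter.1 hx).2).eq_of_mem_of_mem hM
      (hab x' (Finset.mem_filter.1 hx').2) hv hv']
  · intro x a b h
    exact ⟨_, Finset.mem_image_of_mem _ (Finset.mem_filter.2 ⟨Finset.mem_univ x, a, b, h⟩),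
      Finset.mem_insert_self _ _⟩

namespace IsApexTrianglePacking

lemma isNClique (hΓ : M.IsApexTrianglePacking Γ) {s : Finset V} (hs : s ∈ Γ) :
    G.IsNClique 3 s := by
  obtain ⟨x, a, b, rfl, h⟩ := hΓ.exists_isApex s hs
  exact is3Clique_triple_iff.2 ⟨h.2.2.1, h.2.2.2, h.2.1.adj_sub⟩

lemma mem_biUnion_of_adj (hΓ : M.IsApexTrianglePacking Γ) (hM : M.IsMatching) (huv : M.Adj u v)
    (hu : u ∈ ⋃ s ∈ Γ, (s : Set V)) : v ∈ ⋃ s ∈ Γ, (s : Set V) := by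
  simp only [Set.mem_iUnion₂, Finset.mem_coe] at hu ⊢
  obtain ⟨s, hs, hu⟩ := hu
  obtain ⟨x, a, b, rfl, h⟩ := hΓ.exists_isApex s hs
  exact ⟨_, hs, h.mem_of_adj hM huv hu⟩

lemma mem_verts_sdiff_of_adj (hΓ : M.IsApexTrianglePacking Γ)
    (hM : MaximalFor IsMatching verts M) (hx : x ∉ M.verts ∪ ⋃ s ∈ Γ, (s : Set V))
    (hxy : G.Adj x y) : y ∈ M.verts \ ⋃ s ∈ Γ, (s : Set V) := by
  rw [Set.mem_union, not_or] at hx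
  refine ⟨by_contra fun hy => not_adj_of_notMem_verts hM hx.1 hy hxy, fun hy => hx.2 ?_⟩
  simp only [Set.mem_iUnion₂, Finset.mem_coe] at hy ⊢
  obtain ⟨s, hs, hy⟩ := hy
  obtain ⟨x', a, b, rfl, h⟩ := hΓ.exists_isApex s hs
  exact ⟨_, hs, h.eq_of_adj hM hx.1 hxy hy ▸ Finset.mem_insert_self _ _⟩

lemma not_adj_of_adj (hΓ : M.IsApexTrianglePacking Γ) (hM : MaximalFor IsMatching verts M)
    (hx : x ∉ M.verts ∪ ⋃ s ∈ Γ, (s : Set V)) (hz : z ∉ M.verts ∪ ⋃ s ∈ Γ, (s : Set V))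
    (huv : M.Adj u v) (hxu : G.Adj x u) : ¬ G.Adj z v := by
  intro hzv
  rw [Set.mem_union, not_or] at hx hz
  obtain rfl := eq_of_adj_of_adj hM huv hx.1 hz.1 hxu hzv
  obtain ⟨s, hs, hxs⟩ := hΓ.exists_mem x u v ⟨hx.1, huv, hxu, hzv⟩
  exact hx.2 (Set.mem_biUnion hs hxs)

end IsApexTrianglePacking

end Triangles

end SimpleGraph.Subgraph

open SimpleGraph Subgraph

/-- For every graph `H` there exist an independent set `I`, a matching `M`, and a family
`Γ` of pairwise vertex-disjoint triangles, all pairwise vertex-disjoint from each other,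
covering `V(H)`, together with a partition `V(M) = V₁ ∪ V₂` such that every edge of `M`
has one endpoint in `V₁` and one in `V₂`, and every neighbour of every vertex of `I`
lies in `V₁`. -/
theorem exists_matching_triangle_decomposition {V : Type*} [Fintype V]
    (H : SimpleGraph V) :
    ∃ (I : Set V) (M : H.Subgraph) (Γ : Finset (Finset V)),
      M.IsMatching ∧
      (∀ x ∈ I, ∀ y ∈ I, x ≠ y → ¬ H.Adj x y) ∧
      (∀ s ∈ Γ, s.card = 3 ∧ ∀ u ∈ s, ∀ v ∈ s, u ≠ v → H.Adj u v) ∧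
      (∀ s ∈ Γ, ∀ s' ∈ Γ, s ≠ s' → Disjoint s s') ∧
      (∀ s ∈ Γ, Disjoint (↑s : Set V) M.verts ∧ Disjoint (↑s : Set V) I) ∧
      Disjoint I M.verts ∧
      I ∪ M.verts ∪ (⋃ s ∈ Γ, (↑s : Set V)) = Set.univ ∧
      ∃ V₁ V₂ : Set V,
        V₁ ∪ V₂ = M.verts ∧ Disjoint V₁ V₂ ∧
        (∀ u v, M.Adj u v → (u ∈ V₁ ∧ v ∈ V₂) ∨ (u ∈ V₂ ∧ v ∈ V₁)) ∧
        (∀ x ∈ I, ∀ y, H.Adj x y → y ∈ V₁) := by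
  classical
  obtain ⟨M, hM⟩ := exists_maximalFor_isMatching_verts H
  obtain ⟨Γ, hΓ⟩ := exists_isApexTrianglePacking hM
  set T := ⋃ s ∈ Γ, (s : Set V)
  set I := (M.verts ∪ T)ᶜ
  have hM' := hM.1.deleteVerts fun _ _ huv => hΓ.mem_biUnion_of_adj hM.1 huv
  obtain ⟨V₁, V₂, hS, hV, hV₁₂, hcross⟩ := hM'.exists_bipartition (S := {y | ∃ x ∈ I, H.Adj x y})
    (by rintro y ⟨x, hx, hxy⟩; exact hΓ.mem_verts_sdiff_of_adj hM hx hxy)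
    (by rintro u v huv ⟨x, hx, hxu⟩ ⟨z, hz, hzv⟩
        exact hΓ.not_adj_of_adj hM hx hz (deleteVerts_adj.1 huv).2.2.2.2 hxu hzv)
  refine ⟨I, M.deleteVerts T, Γ, hM', fun x hx y hy _ => ?_,
    fun s hs => ⟨(hΓ.isNClique hs).card_eq, fun u hu v hv => (hΓ.isNClique hs).isClique hu hv⟩,
    hΓ.pairwise_disjoint, fun s hs => ?_, ?_, ?_, V₁, V₂, hV, hV₁₂, hcross,
    fun x hx y hxy => hS ⟨x, hx, hxy⟩⟩
  · exact not_adj_of_notMem_verts hM (fun h => hx (.inl h)) (fun h => hy (.inl h))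
  · have hsT : (s : Set V) ⊆ T := Set.subset_biUnion_of_mem hs
    exact ⟨Set.disjoint_sdiff_right.mono_left hsT,
      disjoint_compl_right.mono_left (hsT.trans Set.subset_union_right)⟩
  · exact disjoint_compl_left.mono_right (Set.sdiff_subset.trans Set.subset_union_left)
  · ext v
    simp only [deleteVerts_verts, I, Set.mem_union, Set.mem_compl_iff, Set.mem_sdiff, Set.mem_univ,
      iff_true]
    tauto
end

section
/- Let H be a finite graph, let M be a matching and Γ a family of vertex-disjoint triangles in H, vertex-disjoint from M, chosen so as to maximize |V(M)| + |V(Γ)|. Then the set I of vertices covered by neither M nor Γ is an independent set, and moreover no vertex of I is adjacent to any vertex of a triangle in Γ, and no vertex of I is adjacent to both endpoints of any edge of M. -/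
open SimpleGraph Subgraph Set


/-- If a matching `M` and a family `Γ` of vertex-disjoint triangles (disjoint from `M`)
maximize the number `|V(M)| + 3|Γ|` of covered vertices, then the set of uncovered
vertices is independent, no uncovered vertex is adjacent to a vertex of a triangle of
`Γ`, and no uncovered vertex is adjacent to both endpoints of an edge of `M`. -/
theorem maximal_matching_triangles_independent {V : Type*} [Fintype V]
    (H : SimpleGraph V) (M : H.Subgraph) (Γ : Finset (Finset V))
    (hM : M.IsMatching)
    (hΓ : ∀ s ∈ Γ, s.card = 3 ∧ ∀ u ∈ s, ∀ v ∈ s, u ≠ v → H.Adj u v)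
    (hΓdisj : ∀ s ∈ Γ, ∀ s' ∈ Γ, s ≠ s' → Disjoint s s')
    (hΓM : ∀ s ∈ Γ, Disjoint (↑s : Set V) M.verts)
    (hmax : ∀ (M' : H.Subgraph) (Γ' : Finset (Finset V)),
      M'.IsMatching →
      (∀ s ∈ Γ', s.card = 3 ∧ ∀ u ∈ s, ∀ v ∈ s, u ≠ v → H.Adj u v) →
      (∀ s ∈ Γ', ∀ s' ∈ Γ', s ≠ s' → Disjoint s s') →
      (∀ s ∈ Γ', Disjoint (↑s : Set V) M'.verts) →
      M'.verts.ncard + 3 * Γ'.card ≤ M.verts.ncard + 3 * Γ.card) :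
    ∀ x, x ∉ M.verts → (∀ s ∈ Γ, x ∉ s) →
      ((∀ y, y ∉ M.verts → (∀ s ∈ Γ, y ∉ s) → ¬ H.Adj x y) ∧
       (∀ s ∈ Γ, ∀ y ∈ s, ¬ H.Adj x y) ∧
       (∀ u v, M.Adj u v → ¬ (H.Adj x u ∧ H.Adj x v))) := by
  classical
  intro x hxM hxΓ
  refine ⟨?_, ?_, ?_⟩
  · -- independence
    intro y hyM hyΓ hadj
    have hxy : x ≠ y := hadj.ne
    set M' : H.Subgraph := M ⊔ H.subgraphOfAdj hadj with hM'def
    have hdisj : Disjoint M.support ({x, y} : Set V) := by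
      rw [hM.support_eq_verts]
      rw [Set.disjoint_right]
      rintro a (rfl | rfl) <;> assumption
    have hM' : M'.IsMatching := by
      refine hM.sup (IsMatching.subgraphOfAdj hadj) ?_
      rwa [support_subgraphOfAdj]
    have hverts : M'.verts = M.verts ∪ {x, y} := rfl
    have hcard : M'.verts.ncard = M.verts.ncard + 2 := by
      rw [hverts, Set.ncard_union_eq (by rwa [hM.support_eq_verts] at hdisj)
        (Set.toFinite _) (Set.toFinite _), Set.ncard_pair hxy]
    have hle := hmax M' Γ hM' hΓ hΓdisj ?_
    · omega
    · intro s hs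
      rw [hverts, Set.disjoint_union_right]
      refine ⟨hΓM s hs, ?_⟩
      rw [Set.disjoint_right]
      rintro a (rfl | rfl)
      · exact fun h => hxΓ s hs (by exact_mod_cast h)
      · exact fun h => hyΓ s hs (by exact_mod_cast h)
  · -- no edge to triangles
    intro s hs y hy hadj
    obtain ⟨hcard3, htri⟩ := hΓ s hs
    have h2 : (s.erase y).card = 2 := by
      rw [Finset.card_erase_of_mem hy, hcard3]
    obtain ⟨a, b, hab, hse⟩ := Finset.card_eq_two.mp h2
    have hae : a ∈ s.erase y := by rw [hse]; exact Finset.mem_insert_self a {b}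
    have hbe : b ∈ s.erase y := by rw [hse]; exact Finset.mem_insert_of_mem (Finset.mem_singleton_self b)
    have ha : a ∈ s := Finset.mem_of_mem_erase hae
    have hb : b ∈ s := Finset.mem_of_mem_erase hbe
    have hay : a ≠ y := Finset.ne_of_mem_erase hae
    have hby : b ≠ y := Finset.ne_of_mem_erase hbe
    have hxs : x ∉ s := hxΓ s hs
    have hxy : x ≠ y := fun h => hxs (h ▸ hy)
    have hxa : x ≠ a := fun h => hxs (h ▸ ha)
    have hxb : x ≠ b := fun h => hxs (h ▸ hb)
    have hadjab : H.Adj a b := htri a ha b hb hab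
    have hsM : Disjoint (↑s : Set V) M.verts := hΓM s hs
    have hyM : y ∉ M.verts := fun h => Set.disjoint_left.mp hsM (by exact_mod_cast hy) h
    have haM : a ∉ M.verts := fun h => Set.disjoint_left.mp hsM (by exact_mod_cast ha) h
    have hbM : b ∉ M.verts := fun h => Set.disjoint_left.mp hsM (by exact_mod_cast hb) h
    set M1 : H.Subgraph := M ⊔ H.subgraphOfAdj hadj with hM1def
    have hM1 : M1.IsMatching := by
      refine hM.sup (IsMatching.subgraphOfAdj hadj) ?_
      rw [hM.support_eq_verts, support_subgraphOfAdj, Set.disjoint_right]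
      rintro c (rfl | rfl) <;> assumption
    set M' : H.Subgraph := M1 ⊔ H.subgraphOfAdj hadjab with hM'def
    have hM' : M'.IsMatching := by
      refine hM1.sup (IsMatching.subgraphOfAdj hadjab) ?_
      rw [hM1.support_eq_verts, support_subgraphOfAdj, Set.disjoint_right]
      have hv1 : M1.verts = M.verts ∪ {x, y} := rfl
      rw [hv1]
      rintro c (rfl | rfl) <;>
        simp only [Set.mem_union, Set.mem_insert_iff, Set.mem_singleton_iff] <;> push_neg
      · exact ⟨haM, hxa.symm, hay⟩
      · exact ⟨hbM, hxb.symm, hby⟩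
    have hverts : M'.verts = (M.verts ∪ {x, y}) ∪ {a, b} := rfl
    have hcard : M'.verts.ncard = M.verts.ncard + 4 := by
      rw [hverts]
      rw [Set.ncard_union_eq ?d1 (Set.toFinite _) (Set.toFinite _),
        Set.ncard_union_eq ?d2 (Set.toFinite _) (Set.toFinite _),
        Set.ncard_pair hxy, Set.ncard_pair hab]
      case d2 =>
        rw [Set.disjoint_right]; rintro c (rfl | rfl) <;> assumption
      case d1 =>
        rw [Set.disjoint_right]
        rintro c (rfl | rfl) <;>
          simp only [Set.mem_union, Set.mem_insert_iff, Set.mem_singleton_iff] <;> push_neg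
        · exact ⟨haM, hxa.symm, hay⟩
        · exact ⟨hbM, hxb.symm, hby⟩
    have hΓcard : (Γ.erase s).card = Γ.card - 1 := Finset.card_erase_of_mem hs
    have hΓpos : 1 ≤ Γ.card := Finset.card_pos.mpr ⟨s, hs⟩
    have hle := hmax M' (Γ.erase s) hM'
      (fun t ht => hΓ t (Finset.mem_of_mem_erase ht))
      (fun t ht t' ht' hne => hΓdisj t (Finset.mem_of_mem_erase ht) t' (Finset.mem_of_mem_erase ht') hne)
      ?_
    · omega
    · intro t ht
      have htΓ : t ∈ Γ := Finset.mem_of_mem_erase ht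
      have hts : t ≠ s := Finset.ne_of_mem_erase ht
      have htsdisj : Disjoint t s := hΓdisj t htΓ s hs hts
      rw [hverts, Set.disjoint_union_right, Set.disjoint_union_right]
      refine ⟨⟨hΓM t htΓ, ?_⟩, ?_⟩ <;> rw [Set.disjoint_right]
      · rintro c (rfl | rfl)
        · exact fun h => hxΓ t htΓ (by exact_mod_cast h)
        · exact fun h => Finset.disjoint_left.mp htsdisj (by exact_mod_cast h) hy
      · rintro c (rfl | rfl) <;> intro h
        · exact Finset.disjoint_left.mp htsdisj (by exact_mod_cast h) ha
        · exact Finset.disjoint_left.mp htsdisj (by exact_mod_cast h) hb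
  · -- no vertex adjacent to both ends of a matching edge
    rintro u v huv ⟨hxu, hxv⟩
    have huM : u ∈ M.verts := M.edge_vert huv
    have hvM : v ∈ M.verts := M.edge_vert huv.symm
    have huvne : u ≠ v := huv.ne
    have hxune : x ≠ u := fun h => hxM (h ▸ huM)
    have hxvne : x ≠ v := fun h => hxM (h ▸ hvM)
    have hadjuv : H.Adj u v := M.adj_sub huv
    set t : Finset V := {x, u, v} with htdef
    have htcard : t.card = 3 := by
      rw [htdef]
      rw [Finset.card_insert_of_notMem (by simp [hxune, hxvne]),
        Finset.card_insert_of_notMem (by simp [huvne]), Finset.card_singleton]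
    have httri : ∀ p ∈ t, ∀ q ∈ t, p ≠ q → H.Adj p q := by
      intro p hp q hq hpq
      simp only [htdef, Finset.mem_insert, Finset.mem_singleton] at hp hq
      rcases hp with rfl | rfl | rfl <;> rcases hq with rfl | rfl | rfl <;>
        first
          | exact absurd rfl hpq
          | exact hxu | exact hxv | exact hxu.symm | exact hxv.symm
          | exact hadjuv | exact hadjuv.symm
    have htnot : t ∉ Γ := fun h =>
      Set.disjoint_left.mp (hΓM t h) (by simp [htdef]) huM
    set M' : H.Subgraph := M.deleteVerts {u, v} with hM'def
    have hvertsM' : M'.verts = M.verts \ {u, v} := rfl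
    have hM' : M'.IsMatching := by
      intro w hw
      rw [hvertsM'] at hw
      obtain ⟨hwM, hwuv⟩ := hw
      simp only [Set.mem_insert_iff, Set.mem_singleton_iff] at hwuv
      push_neg at hwuv
      obtain ⟨hwu, hwv⟩ := hwuv
      obtain ⟨w', hww', huniq⟩ := hM hwM
      have hw'M : w' ∈ M.verts := M.edge_vert hww'.symm
      have hw'u : w' ≠ u := by
        rintro rfl
        obtain ⟨z, hz, hzuniq⟩ := hM huM
        have h1 : w = z := hzuniq w hww'.symm
        have h2 : v = z := hzuniq v huv
        exact hwv (h1.trans h2.symm)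
      have hw'v : w' ≠ v := by
        rintro rfl
        obtain ⟨z, hz, hzuniq⟩ := hM hvM
        have h1 : w = z := hzuniq w hww'.symm
        have h2 : u = z := hzuniq u huv.symm
        exact hwu (h1.trans h2.symm)
      refine ⟨w', ?_, ?_⟩
      · simp only [hM'def, Subgraph.deleteVerts_adj]
        exact ⟨hwM, by simp [hwu, hwv], hw'M, by simp [hw'u, hw'v], hww'⟩
      · intro z hz
        rw [Subgraph.deleteVerts_adj] at hz
        exact huniq z hz.2.2.2.2
    have hsub : ({u, v} : Set V) ⊆ M.verts := by
      rintro c (rfl | rfl) <;> assumption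
    have hcard : M'.verts.ncard = M.verts.ncard - 2 := by
      rw [hvertsM', Set.ncard_diff hsub (Set.toFinite _), Set.ncard_pair huvne]
    have hMge : 2 ≤ M.verts.ncard := by
      have := Set.ncard_le_ncard hsub (Set.toFinite _)
      rwa [Set.ncard_pair huvne] at this
    have hΓ'card : (insert t Γ).card = Γ.card + 1 := Finset.card_insert_of_notMem htnot
    have hle := hmax M' (insert t Γ) hM' ?_ ?_ ?_
    · omega
    · intro s hsmem
      rcases Finset.mem_insert.mp hsmem with rfl | hsΓ
      · exact ⟨htcard, httri⟩
      · exact hΓ s hsΓ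
    · intro s hsmem s' hs'mem hne
      have key : ∀ s' ∈ Γ, Disjoint t s' := by
        intro s' hs'
        rw [Finset.disjoint_left]
        intro c hc
        simp only [htdef, Finset.mem_insert, Finset.mem_singleton] at hc
        rcases hc with rfl | rfl | rfl
        · exact hxΓ s' hs'
        · exact fun h => Set.disjoint_left.mp (hΓM s' hs') (by exact_mod_cast h) huM
        · exact fun h => Set.disjoint_left.mp (hΓM s' hs') (by exact_mod_cast h) hvM
      rcases Finset.mem_insert.mp hsmem with rfl | hsΓ <;>
        rcases Finset.mem_insert.mp hs'mem with rfl | hs'Γ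
      · exact absurd rfl hne
      · exact key s' hs'Γ
      · exact (key s hsΓ).symm
      · exact hΓdisj s hsΓ s' hs'Γ hne
    · intro s hsmem
      rw [hvertsM']
      rcases Finset.mem_insert.mp hsmem with rfl | hsΓ
      · rw [Set.disjoint_left]
        intro c hc
        simp only [htdef, Finset.coe_insert, Finset.coe_singleton, Set.mem_insert_iff,
          Set.mem_singleton_iff] at hc
        rcases hc with rfl | rfl | rfl <;> simp [hxM]
      · exact Set.disjoint_of_subset_right (Set.diff_subset) (hΓM s hsΓ)
end

section
/- Let q ∈ ℕ, let G be a finite connected graph with minimum degree δ, and let v ∈ V(G). Then the number of vertices at distance at most 3q+1 from v is at least min{(q+1)(δ+1), |V(G)|}. -/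
/-!
Induct on `q`. If some vertex `u` lies at distance exactly `3q+3` from `v`, its closed
neighbourhood has at least `δ+1` vertices, all at distance between `3q+2` and `3q+4` from `v`:
it is disjoint from the ball of radius `3q+1` and contained in the ball of radius `3q+4`.
The smaller ball misses `u`, so by induction it has at least `(q+1)(δ+1)` vertices, and the two
counts add up. If no vertex lies at distance `3q+3`, then no vertex lies farther away either,
since a shortest path passes through every intermediate distance; so the ball is everything.
-/

namespace SimpleGraph

variable {V : Type*} {G : SimpleGraph V}

lemma Connected.exists_dist_eq_of_le (hconn : G.Connected) {v w : V} {k : ℕ}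
    (hk : k ≤ G.dist v w) : ∃ u, G.dist v u = k := by
  obtain ⟨p, hp⟩ := hconn.exists_walk_length_eq_dist v w
  refine ⟨p.getVert k, le_antisymm ?_ ?_⟩
  · have htake := G.dist_le (p.take k)
    rw [Walk.take_length] at htake
    omega
  · have hdrop := G.dist_le (p.drop k)
    have htri : G.dist v w ≤ G.dist v (p.getVert k) + G.dist (p.getVert k) w :=
      hconn.dist_triangle
    rw [Walk.drop_length] at hdrop
    omega

lemma Adj.dist_le_dist_add_one {u w : V} (hadj : G.Adj u w) (v : V) :
    G.dist v w ≤ G.dist v u + 1 := by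
  rcases hadj.diff_dist_adj (u := v) with h | h | h <;> omega

lemma ncard_insert_neighborSet [Finite V] (u : V) :
    (insert u (G.neighborSet u)).ncard = (G.neighborSet u).ncard + 1 :=
  Set.ncard_insert_of_notMem (G.notMem_neighborSet_self) (Set.toFinite _)

lemma ncard_neighborSet_add_one_le_ncard_dist_le_one [Finite V] (v : V) :
    (G.neighborSet v).ncard + 1 ≤ {u | G.dist v u ≤ 1}.ncard := by
  rw [← ncard_insert_neighborSet]
  refine Set.ncard_le_ncard ?_ (Set.toFinite _)
  rintro w (rfl | hadj)
  · simp
  · simp [dist_eq_one_iff_adj.2 hadj]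

lemma Connected.dist_lt_of_forall_dist_ne (hconn : G.Connected) {v : V} {k : ℕ}
    (h : ∀ u, G.dist v u ≠ k) (w : V) : G.dist v w < k := by
  by_contra! hw
  obtain ⟨u, hu⟩ := hconn.exists_dist_eq_of_le hw
  exact h u hu

lemma ncard_dist_le_add_ncard_neighborSet_lt [Finite V] {v u : V} {r : ℕ}
    (hu : G.dist v u = r + 2) :
    {w | G.dist v w ≤ r}.ncard + (G.neighborSet u).ncard < {w | G.dist v w ≤ r + 3}.ncard := by
  set B := {w | G.dist v w ≤ r}
  set S := insert u (G.neighborSet u)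
  have hS : ∀ w ∈ S, r + 1 ≤ G.dist v w ∧ G.dist v w ≤ r + 3 := by
    rintro w (rfl | hadj)
    · omega
    · have := hadj.dist_le_dist_add_one v
      have := hadj.symm.dist_le_dist_add_one v
      omega
  have hdisj : Disjoint B S := Set.disjoint_left.2 fun w (hwB : G.dist v w ≤ r) hwS ↦ by
    have := (hS w hwS).1
    omega
  have hsub : B ∪ S ⊆ {w | G.dist v w ≤ r + 3} :=
    Set.union_subset (fun w (hw : G.dist v w ≤ r) ↦ by simp only [Set.mem_ofPred_eq]; omega)
      fun w hw ↦ (hS w hw).2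
  calc B.ncard + (G.neighborSet u).ncard
      < B.ncard + S.ncard := by rw [ncard_insert_neighborSet]; omega
    _ = (B ∪ S).ncard := (Set.ncard_union_eq hdisj (Set.toFinite _) (Set.toFinite _)).symm
    _ ≤ _ := Set.ncard_le_ncard hsub (Set.toFinite _)

lemma Connected.min_add_le_ncard_dist_le_add_three [Finite V] (hconn : G.Connected)
    {δ m r : ℕ} (hδ : ∀ w, δ ≤ (G.neighborSet w).ncard) (v : V)
    (hr : min m (Nat.card V) ≤ {u | G.dist v u ≤ r}.ncard) :
    min (m + (δ + 1)) (Nat.card V) ≤ {u | G.dist v u ≤ r + 3}.ncard := by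
  by_cases hfar : ∃ u, G.dist v u = r + 2
  · obtain ⟨u, hu⟩ := hfar
    have hball : {w | G.dist v w ≤ r}.ncard < Nat.card V :=
      Set.ncard_lt_card fun h ↦ by
        have : G.dist v u ≤ r := Set.eq_univ_iff_forall.1 h u
        omega
    have := ncard_dist_le_add_ncard_neighborSet_lt hu
    have := hδ u
    omega
  · have hball : {u | G.dist v u ≤ r + 3} = Set.univ := Set.eq_univ_of_forall fun w ↦ by
      have := hconn.dist_lt_of_forall_dist_ne (not_exists.1 hfar) w
      simp only [Set.mem_ofPred_eq]
      omega
    rw [hball, Set.ncard_univ]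
    exact min_le_right _ _

end SimpleGraph

/-- In a finite connected graph with minimum degree at least `δ`, the ball of radius
`3q+1` around any vertex `v` has at least `min ((q+1)(δ+1)) |V(G)|` vertices. -/
theorem ball_size_lower_bound {V : Type*} [Fintype V]
    (G : SimpleGraph V) (hconn : G.Connected) (δ q : ℕ)
    (hδ : ∀ w, δ ≤ (G.neighborSet w).ncard) (v : V) :
    min ((q + 1) * (δ + 1)) (Fintype.card V) ≤ {u | G.dist v u ≤ 3 * q + 1}.ncard := by
  rw [← Nat.card_eq_fintype_card]
  induction q with
  | zero =>
    have := G.ncard_neighborSet_add_one_le_ncard_dist_le_one v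
    have := hδ v
    simp only [zero_add, one_mul, mul_zero]
    omega
  | succ q ih =>
    rw [add_one_mul (q + 1), show 3 * (q + 1) + 1 = 3 * q + 1 + 3 by ring]
    exact hconn.min_add_le_ncard_dist_le_add_three hδ v ih
end

section
/- Every connected finite graph G on n vertices with minimum degree δ(G) ≥ 2 satisfies diam(G) ≤ ⌊3n/(δ(G)+1)⌋ − 1. -/
/-!
Take a shortest path `u = x₀, x₁, …, x_d = v`. Along a geodesic `dist xᵢ xⱼ = |i - j|`, so the
closed neighbourhoods of `x₀, x₃, x₆, …` are pairwise disjoint. There are `⌊d/3⌋ + 1` of them,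
each with at least `δ + 1` vertices, hence `(⌊d/3⌋ + 1)(δ + 1) ≤ n`, and
`d ≤ 3(⌊d/3⌋ + 1) - 1 ≤ ⌊3n/(δ+1)⌋ - 1`.
-/

open Finset

theorem Finset.card_mul_le_card_biUnion {ι β : Type*} [DecidableEq β] {s : Finset ι}
    {f : ι → Finset β} {n : ℕ} (hs : (s : Set ι).PairwiseDisjoint f)
    (h : ∀ i ∈ s, n ≤ #(f i)) : #s * n ≤ #(s.biUnion f) := by
  rw [card_biUnion hs]
  simpa using card_nsmul_le_sum s (fun i ↦ #(f i)) n h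

namespace SimpleGraph

variable {V : Type*} {G : SimpleGraph V}

theorem ncard_neighborSet_eq_degree (v : V) [Fintype (G.neighborSet v)] :
    (G.neighborSet v).ncard = G.degree v := by
  rw [Set.ncard_eq_toFinset_card', ← card_neighborFinset_eq_degree, neighborFinset]

namespace Walk

variable {u v : V}

theorem dist_getVert_le (p : G.Walk u v) {i j : ℕ} (hij : i ≤ j) :
    G.dist (p.getVert i) (p.getVert j) ≤ j - i := by
  have h := dist_le ((p.drop i).take (j - i))
  simp only [take_length, drop_getVert, Nat.add_sub_cancel' hij] at h
  omega

theorem dist_getVert_eq_of_length_eq_dist (p : G.Walk u v) (hp : p.length = G.dist u v)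
    {i j : ℕ} (hij : i ≤ j) (hj : j ≤ p.length) :
    G.dist (p.getVert i) (p.getVert j) = j - i := by
  have hu : G.dist u (p.getVert i) ≤ i := by simpa using p.dist_getVert_le (Nat.zero_le i)
  have hv : G.dist (p.getVert j) v ≤ p.length - j := by simpa using p.dist_getVert_le hj
  have htri_u : G.dist u v ≤ G.dist u (p.getVert i) + G.dist (p.getVert i) v :=
    Reachable.dist_triangle_left ⟨p.take i⟩ v
  have htri_v : G.dist (p.getVert i) v ≤
      G.dist (p.getVert i) (p.getVert j) + G.dist (p.getVert j) v :=
    Reachable.dist_triangle_right ⟨p.drop j⟩ _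
  have := p.dist_getVert_le hij
  omega

end Walk

section ClosedNeighborhood

variable [DecidableEq V]

def closedNeighborFinset (v : V) [Fintype (G.neighborSet v)] : Finset V :=
  insert v (G.neighborFinset v)

variable {v w : V} [Fintype (G.neighborSet v)] [Fintype (G.neighborSet w)]

theorem card_closedNeighborFinset : #(G.closedNeighborFinset v) = G.degree v + 1 :=
  card_insert_of_notMem (by simp)

theorem dist_le_one_of_mem_closedNeighborFinset {x : V} (hx : x ∈ G.closedNeighborFinset v) :
    G.dist v x ≤ 1 := by
  rcases mem_insert.mp hx with rfl | hadj
  · simp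
  · exact (dist_eq_one_iff_adj.mpr ((G.mem_neighborFinset v x).mp hadj)).le

theorem disjoint_closedNeighborFinset_of_three_le_dist (h : 3 ≤ G.dist v w) :
    Disjoint (G.closedNeighborFinset v) (G.closedNeighborFinset w) := by
  refine Finset.disjoint_left.mpr fun x hv hw ↦ ?_
  have hvx := dist_le_one_of_mem_closedNeighborFinset hv
  have hwx := dist_le_one_of_mem_closedNeighborFinset hw
  have hreach : G.Reachable v x := by
    rcases mem_insert.mp hv with rfl | hadj
    · rfl
    · exact ((G.mem_neighborFinset v x).mp hadj).reachable
  have := hreach.dist_triangle_left w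
  rw [dist_comm] at hwx
  omega

end ClosedNeighborhood

theorem Walk.mul_le_card_of_length_eq_dist [Fintype V] [DecidableRel G.Adj] {u v : V}
    (p : G.Walk u v) (hp : p.length = G.dist u v) {δ : ℕ} (hδ : ∀ w, δ ≤ G.degree w) :
    (p.length / 3 + 1) * (δ + 1) ≤ Fintype.card V := by
  classical
  let s := range (p.length / 3 + 1)
  have hdisj :
      (s : Set ℕ).PairwiseDisjoint fun j ↦ G.closedNeighborFinset (p.getVert (3 * j)) := by
    intro i hi j hj hij
    wlog hlt : i < j generalizing i j
    · exact (this hj hi hij.symm (by omega)).symm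
    simp only [coe_range, Set.mem_Iio, s] at hj
    apply disjoint_closedNeighborFinset_of_three_le_dist
    rw [p.dist_getVert_eq_of_length_eq_dist hp (by omega) (by omega)]
    omega
  calc (p.length / 3 + 1) * (δ + 1) = #s * (δ + 1) := by rw [card_range]
    _ ≤ #(s.biUnion fun j ↦ G.closedNeighborFinset (p.getVert (3 * j))) :=
      card_mul_le_card_biUnion hdisj fun j _ ↦ by
        rw [card_closedNeighborFinset]; exact Nat.succ_le_succ (hδ _)
    _ ≤ Fintype.card V := card_le_univ _

end SimpleGraph

theorem diameter_le_of_minDegree_general {V : Type*} [Fintype V]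
    (G : SimpleGraph V) (hconn : G.Connected) (n δ : ℕ)
    (hn : Fintype.card V = n)
    (hδ : ∀ w, δ ≤ (G.neighborSet w).ncard) :
    ∀ u v, G.dist u v ≤ 3 * n / (δ + 1) - 1 := by
  classical
  intro u v
  obtain ⟨p, hp⟩ := hconn.exists_walk_length_eq_dist u v
  have hcount := p.mul_le_card_of_length_eq_dist hp fun w ↦
    (hδ w).trans_eq (G.ncard_neighborSet_eq_degree w)
  have h3 : 3 * (p.length / 3 + 1) ≤ 3 * n / (δ + 1) := by
    rw [Nat.le_div_iff_mul_le δ.succ_pos, mul_assoc, ← hn]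
    exact Nat.mul_le_mul_left 3 hcount
  omega

/-- Erdős–Pach–Pollack–Tuza: every connected graph on `n` vertices with minimum degree
`δ ≥ 2` has diameter at most `⌊3n/(δ+1)⌋ − 1`: every two vertices are at distance at
most `3n/(δ+1) − 1`. -/
theorem diameter_le_of_minDegree {V : Type*} [Fintype V]
    (G : SimpleGraph V) (hconn : G.Connected) (n δ : ℕ)
    (hn : Fintype.card V = n) (hδ2 : 2 ≤ δ)
    (hδ : ∀ w, δ ≤ (G.neighborSet w).ncard) :
    ∀ u v, G.dist u v ≤ 3 * n / (δ + 1) - 1 :=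
  diameter_le_of_minDegree_general G hconn n δ hn hδ
end

section
/- Let β ∈ (0,1) and let T be a rooted tree on t+1 vertices. Then there exists a set S ⊆ V(T) containing the root, with |S| < 1/β + 2, such that every connected component of T − S has at most β·t vertices. -/
/-!
Put `m = β t` and give every vertex `v` the block count `⌊|subtree v| / m⌋`. The subtrees of the
children of `v` partition the subtree of `v` minus `v`, so the block counts of the children add up
to at most that of `v`; the seeds are the vertices where this inequality is strict. Counting
bottom-up, there are at most as many seeds below a vertex as its block count, so the seeds other
than the root number at most `t / m = 1 / β`. At a vertex `v` which is not a seed, the remainder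
`|subtree v| - m ⌊|subtree v| / m⌋ ∈ [0, m)` is at least one plus the sum of the remainders of the
children; hence a component of `T` minus the root and the seeds, which hangs from its top vertex,
has fewer than `m` vertices.
-/

open Finset

theorem mul_floor_div_le {x m : ℝ} (hm : 0 < m) (hx : 0 ≤ x) : m * ⌊x / m⌋₊ ≤ x := by
  have := Nat.floor_le (div_nonneg hx hm.le)
  rwa [le_div_iff₀ hm, mul_comm] at this

theorem lt_mul_floor_div_add {x m : ℝ} (hm : 0 < m) : x < m * ⌊x / m⌋₊ + m := by
  have := Nat.lt_floor_add_one (x / m)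
  rwa [div_lt_iff₀ hm, add_mul, one_mul, mul_comm] at this

namespace SimpleGraph

variable {V : Type*} {G : SimpleGraph V} {r u v w c : V}

/-- The vertices `u` such that every walk from `r` to `u` visits `v`; when `G` is a tree rooted
at `r`, this is the subtree hanging from `v`. -/
def subtree (G : SimpleGraph V) (r v : V) : Set V :=
  {u | ∀ p : G.Walk r u, v ∈ p.support}

theorem mem_subtree_self (G : SimpleGraph V) (r v : V) : v ∈ G.subtree r v :=
  fun p => p.end_mem_support

theorem mem_subtree_root (G : SimpleGraph V) (r u : V) : u ∈ G.subtree r r :=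
  fun p => p.start_mem_support

theorem subtree_subset_subtree (h : c ∈ G.subtree r v) : G.subtree r c ⊆ G.subtree r v := by
  classical
  intro u hu p
  exact p.support_takeUntil_subset_support (hu p) (h _)

theorem mem_support_of_mem_subtree (hv : v ∉ G.subtree r c) (hu : u ∈ G.subtree r c)
    (p : G.Walk v u) : c ∈ p.support := by
  simp only [subtree, Set.mem_ofPred_eq, not_forall] at hv
  obtain ⟨q, hq⟩ := hv
  exact ((Walk.mem_support_append_iff q p).mp (hu (q.append p))).resolve_left hq

theorem eq_of_adj_of_mem_subtree (h : G.Adj w u) (hw : w ∉ G.subtree r v)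
    (hu : u ∈ G.subtree r v) : u = v := by
  have hv := mem_support_of_mem_subtree hw hu h.toWalk
  simp only [Walk.support_cons, Walk.support_nil, List.mem_cons, List.not_mem_nil,
    or_false] at hv
  rcases hv with rfl | rfl
  · exact absurd (G.mem_subtree_self r v) hw
  · rfl

theorem eq_of_mem_subtree_of_mem_subtree (hr : G.Reachable r u) (huv : u ∈ G.subtree r v)
    (hvu : v ∈ G.subtree r u) : u = v := by
  by_contra hne
  refine hr.elim_path fun ⟨p, hp⟩ => ?_
  obtain ⟨q, s, -, -, rfl⟩ := hp.mem_support_iff_exists_append.mp (huv p)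
  exact hp.ne_of_mem_support_of_append hne (hvu q) s.end_mem_support rfl

theorem IsAcyclic.mem_subtree_iff (hG : G.IsAcyclic) {p : G.Walk r u} (hp : p.IsPath) :
    u ∈ G.subtree r v ↔ v ∈ p.support := by
  classical
  refine ⟨fun h => h p, fun h q => ?_⟩
  have : q.bypass = p :=
    congrArg Subtype.val ((hG.subsingleton_path r u).elim ⟨_, q.bypass_isPath⟩ ⟨p, hp⟩)
  exact q.support_bypass_subset_support (this ▸ h)

theorem IsAcyclic.mem_subtree_or_mem_subtree (hG : G.IsAcyclic) {p : G.Walk r u}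
    (hp : p.IsPath) {x y : V} (hx : x ∈ p.support) (hy : y ∈ p.support) :
    x ∈ G.subtree r y ∨ y ∈ G.subtree r x := by
  obtain ⟨q, s, hq, -, rfl⟩ := hp.mem_support_iff_exists_append.mp hx
  rcases (Walk.mem_support_append_iff q s).mp hy with hyq | hys
  · exact Or.inl ((hG.mem_subtree_iff hq).mpr hyq)
  · obtain ⟨s₁, s₂, rfl⟩ := Walk.mem_support_iff_exists_append.mp hys
    rw [Walk.append_assoc] at hp
    exact Or.inr ((hG.mem_subtree_iff hp.of_append_left).mpr
      ((Walk.mem_support_append_iff q s₁).mpr (Or.inl q.end_mem_support)))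

namespace IsTree

variable (hT : G.IsTree)
include hT

theorem notMem_subtree_of_adj (h : G.Adj v c) (hc : c ∈ G.subtree r v) :
    v ∉ G.subtree r c :=
  fun hv => h.ne (eq_of_mem_subtree_of_mem_subtree (hT.connected r v) hv hc)

theorem mem_subtree_or_mem_subtree_of_adj {a b : V} (h : G.Adj a b) :
    a ∈ G.subtree r b ∨ b ∈ G.subtree r a := by
  obtain ⟨p, hp, -⟩ := hT.existsUnique_path r a
  by_cases hb : b ∈ p.support
  · exact Or.inl ((hT.isAcyclic.mem_subtree_iff hp).mpr hb)
  · exact Or.inr ((hT.isAcyclic.mem_subtree_iff (hp.concat hb h)).mpr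
      (p.support_subset_support_concat h p.end_mem_support))

theorem exists_adj_mem_subtree (huv : u ∈ G.subtree r v) (hne : u ≠ v) :
    ∃ c, G.Adj v c ∧ c ∈ G.subtree r v ∧ u ∈ G.subtree r c := by
  obtain ⟨p, hp, -⟩ := hT.existsUnique_path r u
  obtain ⟨q, s, hq, -, rfl⟩ := hp.mem_support_iff_exists_append.mp (huv p)
  have hs : ¬s.Nil := Walk.not_nil_of_ne hne.symm
  have hadj : G.Adj v s.snd := s.adj_snd hs
  have hsnd : s.snd ∈ s.support := List.mem_of_mem_tail (s.snd_mem_tail_support hs)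
  have hsnd_q : s.snd ∉ q.support := fun h =>
    hp.ne_of_mem_support_of_append hadj.ne.symm h hsnd rfl
  refine ⟨s.snd, hadj, ?_, ?_⟩
  · exact (hT.isAcyclic.mem_subtree_iff (hq.concat hsnd_q hadj)).mpr
      (q.support_subset_support_concat hadj q.end_mem_support)
  · exact (hT.isAcyclic.mem_subtree_iff hp).mpr
      ((Walk.mem_support_append_iff q s).mpr (Or.inr hsnd))

theorem disjoint_subtree_of_adj {c' : V} (hc : G.Adj v c) (hc' : G.Adj v c')
    (hcv : c ∈ G.subtree r v) (hc'v : c' ∈ G.subtree r v) (hne : c ≠ c') :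
    Disjoint (G.subtree r c) (G.subtree r c') := by
  refine Set.disjoint_left.mpr fun u hu hu' => hne ?_
  obtain ⟨p, hp, -⟩ := hT.existsUnique_path r u
  rcases hT.isAcyclic.mem_subtree_or_mem_subtree hp (hu p) (hu' p) with h | h
  · exact eq_of_adj_of_mem_subtree hc (hT.notMem_subtree_of_adj hc' hc'v) h
  · exact (eq_of_adj_of_mem_subtree hc' (hT.notMem_subtree_of_adj hc hcv) h).symm

theorem exists_mem_support_subtree {a b : V} (q : G.Walk a b) :
    ∃ x ∈ q.support, a ∈ G.subtree r x ∧ b ∈ G.subtree r x := by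
  induction q with
  | nil => exact ⟨_, Walk.start_mem_support _, G.mem_subtree_self r _, G.mem_subtree_self r _⟩
  | @cons a a' b h q ih =>
    obtain ⟨x, hxq, ha'x, hbx⟩ := ih
    by_cases hax : a ∈ G.subtree r x
    · exact ⟨x, List.mem_cons_of_mem a hxq, hax, hbx⟩
    · obtain rfl : a' = x := eq_of_adj_of_mem_subtree h hax ha'x
      have ha' : a' ∈ G.subtree r a := (hT.mem_subtree_or_mem_subtree_of_adj h).resolve_left hax
      exact ⟨a, Walk.start_mem_support _, G.mem_subtree_self r a, subtree_subset_subtree ha' hbx⟩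

end IsTree

section Finite

variable [Fintype V]

open scoped Classical in
noncomputable def subtreeFinset (G : SimpleGraph V) (r v : V) : Finset V :=
  {u | u ∈ G.subtree r v}

@[simp]
theorem mem_subtreeFinset : u ∈ G.subtreeFinset r v ↔ u ∈ G.subtree r v := by
  simp [subtreeFinset]

theorem subtreeFinset_root (G : SimpleGraph V) (r : V) : G.subtreeFinset r r = univ :=
  eq_univ_of_forall fun u => mem_subtreeFinset.mpr (G.mem_subtree_root r u)

open scoped Classical in
noncomputable def children (G : SimpleGraph V) (r v : V) : Finset V :=
  {c | G.Adj v c ∧ c ∈ G.subtree r v}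

@[simp]
theorem mem_children : c ∈ G.children r v ↔ G.Adj v c ∧ c ∈ G.subtree r v := by
  simp [children]

noncomputable def blockCount (G : SimpleGraph V) (r : V) (m : ℝ) (v : V) : ℕ :=
  ⌊(#(G.subtreeFinset r v) : ℝ) / m⌋₊

noncomputable def blockRemainder (G : SimpleGraph V) (r : V) (m : ℝ) (v : V) : ℝ :=
  #(G.subtreeFinset r v) - m * G.blockCount r m v

def IsSeed (G : SimpleGraph V) (r : V) (m : ℝ) (v : V) : Prop :=
  ∑ c ∈ G.children r v, G.blockCount r m c < G.blockCount r m v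

open scoped Classical in
noncomputable def seedsBelow (G : SimpleGraph V) (r : V) (m : ℝ) (v : V) : Finset V :=
  {w ∈ G.subtreeFinset r v | G.IsSeed r m w}

@[simp]
theorem mem_seedsBelow {m : ℝ} :
    w ∈ G.seedsBelow r m v ↔ w ∈ G.subtree r v ∧ G.IsSeed r m w := by
  simp [seedsBelow]

theorem blockRemainder_nonneg {m : ℝ} (hm : 0 < m) : 0 ≤ G.blockRemainder r m v :=
  sub_nonneg.mpr (mul_floor_div_le hm (Nat.cast_nonneg _))

theorem blockRemainder_lt {m : ℝ} (hm : 0 < m) : G.blockRemainder r m v < m := by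
  have := lt_mul_floor_div_add (x := (#(G.subtreeFinset r v) : ℝ)) hm
  rw [blockRemainder, blockCount]
  linarith

/-- The vertices `u` below `v` such that the tree path from `v` to `u`, made of the `y` with
`y ∈ subtree r v` and `u ∈ subtree r y`, stays inside `W`. -/
noncomputable def subtreeWithin (G : SimpleGraph V) (r : V) (W : Set V) (v : V) : Finset V :=
  open scoped Classical in
  {u | u ∈ G.subtree r v ∧ ∀ y ∈ G.subtree r v, u ∈ G.subtree r y → y ∈ W}

@[simp]
theorem mem_subtreeWithin {W : Set V} : u ∈ G.subtreeWithin r W v ↔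
    u ∈ G.subtree r v ∧ ∀ y ∈ G.subtree r v, u ∈ G.subtree r y → y ∈ W := by
  simp [subtreeWithin]

namespace IsTree

variable (hT : G.IsTree)
include hT

theorem erase_subtreeFinset [DecidableEq V] (v : V) :
    (G.subtreeFinset r v).erase v = (G.children r v).biUnion (G.subtreeFinset r) := by
  ext u
  simp only [mem_erase, mem_subtreeFinset, mem_biUnion, mem_children]
  constructor
  · rintro ⟨hne, hu⟩
    obtain ⟨c, hvc, hc, huc⟩ := hT.exists_adj_mem_subtree hu hne
    exact ⟨c, ⟨hvc, hc⟩, huc⟩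
  · rintro ⟨c, ⟨hvc, hc⟩, huc⟩
    refine ⟨?_, subtree_subset_subtree hc huc⟩
    rintro rfl
    exact hT.notMem_subtree_of_adj hvc hc huc

theorem card_subtreeFinset (v : V) :
    #(G.subtreeFinset r v) = 1 + ∑ c ∈ G.children r v, #(G.subtreeFinset r c) := by
  classical
  rw [← card_erase_add_one (mem_subtreeFinset.mpr (G.mem_subtree_self r v)),
    hT.erase_subtreeFinset, card_biUnion, add_comm]
  intro c hc c' hc' hne
  rw [mem_coe, mem_children] at hc hc'
  exact Finset.disjoint_left.mpr fun u hu hu' => Set.disjoint_left.mp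
    (hT.disjoint_subtree_of_adj hc.1 hc'.1 hc.2 hc'.2 hne) (mem_subtreeFinset.mp hu)
    (mem_subtreeFinset.mp hu')

theorem card_subtreeFinset_lt (huv : u ∈ G.subtree r v) (hne : u ≠ v) :
    #(G.subtreeFinset r u) < #(G.subtreeFinset r v) := by
  refine card_lt_card ((ssubset_iff_of_subset fun w hw => ?_).mpr ⟨v, ?_, fun hv => ?_⟩)
  · exact mem_subtreeFinset.mpr (subtree_subset_subtree huv (mem_subtreeFinset.mp hw))
  · exact mem_subtreeFinset.mpr (G.mem_subtree_self r v)
  · exact hne (eq_of_mem_subtree_of_mem_subtree (hT.connected r u) huv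
      (mem_subtreeFinset.mp hv))

theorem card_subtreeFinset_lt_of_mem_children (hc : c ∈ G.children r v) :
    #(G.subtreeFinset r c) < #(G.subtreeFinset r v) := by
  rw [mem_children] at hc
  exact hT.card_subtreeFinset_lt hc.2 hc.1.ne'

theorem sum_blockCount_le {m : ℝ} (hm : 0 ≤ m) (v : V) :
    ∑ c ∈ G.children r v, (G.blockCount r m c : ℝ) ≤ (#(G.subtreeFinset r v) - 1) / m := by
  calc ∑ c ∈ G.children r v, (G.blockCount r m c : ℝ)
      ≤ ∑ c ∈ G.children r v, (#(G.subtreeFinset r c) : ℝ) / m :=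
        sum_le_sum fun c _ => Nat.floor_le (by positivity)
    _ = (#(G.subtreeFinset r v) - 1) / m := by
        rw [← sum_div, hT.card_subtreeFinset v]
        push_cast
        ring

theorem sum_blockCount_le_blockCount {m : ℝ} (hm : 0 ≤ m) (v : V) :
    ∑ c ∈ G.children r v, G.blockCount r m c ≤ G.blockCount r m v := by
  refine Nat.le_floor ?_
  push_cast
  exact (hT.sum_blockCount_le hm v).trans (by gcongr; linarith)

theorem one_add_sum_blockRemainder_le {m : ℝ} (hm : 0 ≤ m) (hv : ¬G.IsSeed r m v) :
    1 + ∑ c ∈ G.children r v, G.blockRemainder r m c ≤ G.blockRemainder r m v := by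
  have hb : (G.blockCount r m v : ℝ) ≤ ∑ c ∈ G.children r v, (G.blockCount r m c : ℝ) := by
    exact_mod_cast not_lt.mp hv
  have := mul_le_mul_of_nonneg_left hb hm
  simp only [blockRemainder, sum_sub_distrib, ← mul_sum, hT.card_subtreeFinset v]
  push_cast
  linarith

theorem card_seedsBelow_erase_le [DecidableEq V] {m : ℝ} (v : V) :
    #((G.seedsBelow r m v).erase v) ≤ ∑ c ∈ G.children r v, #(G.seedsBelow r m c) := by
  rw [seedsBelow, ← filter_erase, hT.erase_subtreeFinset, filter_biUnion]
  exact card_biUnion_le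

theorem card_seedsBelow_le [DecidableEq V] {m : ℝ} (hm : 0 ≤ m) (v : V) :
    #(G.seedsBelow r m v) ≤ G.blockCount r m v := by
  have hchildren : ∑ c ∈ G.children r v, #(G.seedsBelow r m c)
      ≤ ∑ c ∈ G.children r v, G.blockCount r m c :=
    sum_le_sum fun c _ => card_seedsBelow_le hm c
  have herase := (hT.card_seedsBelow_erase_le v).trans hchildren
  by_cases hv : G.IsSeed r m v
  · have := pred_card_le_card_erase (s := G.seedsBelow r m v) (a := v)
    unfold IsSeed at hv
    omega
  · rw [← erase_eq_of_notMem fun h => hv (mem_seedsBelow.mp h).2]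
    exact herase.trans (hT.sum_blockCount_le_blockCount hm v)
termination_by #(G.subtreeFinset r v)
decreasing_by exact hT.card_subtreeFinset_lt_of_mem_children ‹_›

theorem subtreeWithin_subset [DecidableEq V] (W : Set V) (v : V) :
    G.subtreeWithin r W v ⊆ insert v ((G.children r v).biUnion (G.subtreeWithin r W)) := by
  intro u hu
  obtain ⟨huv, hW⟩ := mem_subtreeWithin.mp hu
  rcases eq_or_ne u v with rfl | hne
  · exact mem_insert_self u _
  obtain ⟨c, hvc, hc, huc⟩ := hT.exists_adj_mem_subtree huv hne
  refine mem_insert_of_mem (mem_biUnion.mpr ⟨c, mem_children.mpr ⟨hvc, hc⟩, ?_⟩)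
  exact mem_subtreeWithin.mpr ⟨huc, fun y hy huy => hW y (subtree_subset_subtree hc hy) huy⟩

theorem card_subtreeWithin_le {m : ℝ} (hm : 0 < m) {W : Set V}
    (hW : ∀ w ∈ W, ¬G.IsSeed r m w) (v : V) :
    (#(G.subtreeWithin r W v) : ℝ) ≤ G.blockRemainder r m v := by
  classical
  rcases (G.subtreeWithin r W v).eq_empty_or_nonempty with hempty | ⟨u, hu⟩
  · simpa [hempty] using blockRemainder_nonneg hm
  obtain ⟨huv, hu⟩ := mem_subtreeWithin.mp hu
  have hv : v ∈ W := hu v (G.mem_subtree_self r v) huv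
  have hcard : #(G.subtreeWithin r W v) ≤ 1 + ∑ c ∈ G.children r v, #(G.subtreeWithin r W c) := by
    calc #(G.subtreeWithin r W v)
        ≤ #((G.children r v).biUnion (G.subtreeWithin r W)) + 1 :=
          (card_le_card (hT.subtreeWithin_subset W v)).trans (card_insert_le _ _)
      _ ≤ 1 + ∑ c ∈ G.children r v, #(G.subtreeWithin r W c) := by
          rw [add_comm]
          exact Nat.add_le_add_left card_biUnion_le 1
  calc (#(G.subtreeWithin r W v) : ℝ)
      ≤ 1 + ∑ c ∈ G.children r v, (#(G.subtreeWithin r W c) : ℝ) := by exact_mod_cast hcard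
    _ ≤ 1 + ∑ c ∈ G.children r v, G.blockRemainder r m c := by
        gcongr with c
        exact card_subtreeWithin_le hm hW c
    _ ≤ G.blockRemainder r m v := hT.one_add_sum_blockRemainder_le hm.le (hW v hv)
termination_by #(G.subtreeFinset r v)
decreasing_by exact hT.card_subtreeFinset_lt_of_mem_children ‹_›

theorem exists_supp_subset_subtreeWithin {W : Set V} (C : (G.induce W).ConnectedComponent) :
    ∃ x, Subtype.val '' C.supp ⊆ G.subtreeWithin r W x := by
  classical
  obtain ⟨x, hxC, hmax⟩ := C.supp.exists_max_image (fun x => #(G.subtreeFinset r x))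
    C.supp.toFinite C.nonempty_supp
  refine ⟨x, ?_⟩
  rintro _ ⟨u, huC, rfl⟩
  obtain ⟨q⟩ := ConnectedComponent.exact
    (((C.mem_supp_iff x).mp hxC).trans ((C.mem_supp_iff u).mp huC).symm)
  set q' : G.Walk x u := q.map (Embedding.induce W).toHom
  have hq' : ∀ y ∈ q'.support, ∃ y' ∈ q.support, (y' : V) = y := fun y hy =>
    List.mem_map.mp ((Walk.support_map _ q).subst hy)
  -- `x` has the largest subtree in `C`, so the common ancestor of `x` and `u` found on `q'`,
  -- a vertex of `C`, is `x` itself.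
  obtain ⟨y, hyq, hxy, huy⟩ := hT.exists_mem_support_subtree (r := r) q'
  obtain ⟨y', hy'q, rfl⟩ := hq' y hyq
  have hy'C : y' ∈ C.supp := by
    rw [C.mem_supp_iff, ← (C.mem_supp_iff x).mp hxC]
    exact ConnectedComponent.sound (q.takeUntil y' hy'q).reachable.symm
  obtain rfl : y' = x := by
    by_contra hne
    exact not_lt.mpr (hmax y' hy'C)
      (hT.card_subtreeFinset_lt hxy (Subtype.coe_ne_coe.mpr hne).symm)
  refine mem_subtreeWithin.mpr ⟨huy, fun z hz huz => ?_⟩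
  rcases eq_or_ne z y' with rfl | hzy
  · exact y'.2
  -- Every vertex of the tree path from `x` to `u` is visited by `q'`, which stays in `W`.
  have hz' : z ∈ q'.support := mem_support_of_mem_subtree
    (fun hyz => hzy (eq_of_mem_subtree_of_mem_subtree (hT.connected r _) hyz hz).symm) huz q'
  obtain ⟨z', -, rfl⟩ := hq' z hz'
  exact z'.2

theorem card_insert_seedsBelow_le [DecidableEq V] {m : ℝ} (hm : 0 ≤ m) (v : V) :
    (#(insert v (G.seedsBelow r m v)) : ℝ) ≤ 1 + (#(G.subtreeFinset r v) - 1) / m := by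
  have hseeds : #((G.seedsBelow r m v).erase v) ≤ ∑ c ∈ G.children r v, G.blockCount r m c :=
    (hT.card_seedsBelow_erase_le v).trans (sum_le_sum fun c _ => hT.card_seedsBelow_le hm c)
  have hinsert : #(insert v (G.seedsBelow r m v)) = #((G.seedsBelow r m v).erase v) + 1 := by
    rw [← card_erase_add_one (mem_insert_self v _), erase_insert_eq_erase]
  calc (#(insert v (G.seedsBelow r m v)) : ℝ)
      ≤ 1 + ∑ c ∈ G.children r v, (G.blockCount r m c : ℝ) := by
        rw [hinsert, add_comm]
        exact_mod_cast Nat.add_le_add_left hseeds 1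
    _ ≤ 1 + (#(G.subtreeFinset r v) - 1) / m := by
        gcongr
        exact hT.sum_blockCount_le hm v

theorem ncard_supp_lt {m : ℝ} (hm : 0 < m) {W : Set V} (hW : ∀ w ∈ W, ¬G.IsSeed r m w)
    (C : (G.induce W).ConnectedComponent) : (C.supp.ncard : ℝ) < m := by
  obtain ⟨x, hx⟩ := hT.exists_supp_subset_subtreeWithin (r := r) C
  calc (C.supp.ncard : ℝ) = (Subtype.val '' C.supp).ncard := by
        rw [Set.ncard_image_of_injective _ Subtype.val_injective]
    _ ≤ #(G.subtreeWithin r W x) := by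
        exact_mod_cast (Set.ncard_le_ncard hx).trans_eq (Set.ncard_coe_finset _)
    _ ≤ G.blockRemainder r m x := hT.card_subtreeWithin_le hm hW x
    _ < m := blockRemainder_lt hm

end IsTree

end Finite

end SimpleGraph

theorem exists_seed_decomposition_general {V : Type*} [Fintype V]
    (T : SimpleGraph V) (t : ℕ) (hT : T.IsTree)
    (hcard : Fintype.card V = t + 1) (r : V)
    (β : ℝ) (hβ0 : 0 < β) :
    ∃ S : Set V, r ∈ S ∧ (S.ncard : ℝ) < 1 / β + 2 ∧
      ∀ c : (T.induce {v | v ∉ S}).ConnectedComponent,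
        (c.supp.ncard : ℝ) ≤ β * t := by
  classical
  obtain rfl | ht := t.eq_zero_or_pos
  · refine ⟨Set.univ, trivial, ?_, fun C => absurd trivial C.nonempty_supp.some.2⟩
    rw [Set.ncard_univ, Nat.card_eq_fintype_card, hcard]
    push_cast
    linarith [one_div_pos.mpr hβ0]
  set m := β * t
  have hm : 0 < m := by positivity
  refine ⟨↑(insert r (T.seedsBelow r m r)), mem_insert_self r _, ?_, fun C => ?_⟩
  · have hblocks : ((#(T.subtreeFinset r r) : ℝ) - 1) / m = 1 / β := by
      rw [T.subtreeFinset_root r, card_univ, hcard]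
      push_cast
      field_simp
      ring
    rw [Set.ncard_coe_finset]
    linarith [hT.card_insert_seedsBelow_le (r := r) hm.le r]
  · refine (hT.ncard_supp_lt (r := r) hm (fun w hw hseed => ?_) C).le
    exact hw (mem_insert_of_mem (SimpleGraph.mem_seedsBelow.mpr ⟨T.mem_subtree_root r w, hseed⟩))

/-- Let `β ∈ (0,1)` and let `T` be a tree on `t+1` vertices rooted at `r`. Then there is
a set `S` of vertices containing the root, with `|S| < 1/β + 2`, such that every
connected component of `T − S` has at most `β·t` vertices. -/
theorem exists_seed_decomposition {V : Type*} [Fintype V]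
    (T : SimpleGraph V) (t : ℕ) (hT : T.IsTree)
    (hcard : Fintype.card V = t + 1) (r : V)
    (β : ℝ) (hβ0 : 0 < β) (hβ1 : β < 1) :
    ∃ S : Set V, r ∈ S ∧ (S.ncard : ℝ) < 1 / β + 2 ∧
      ∀ c : (T.induce {v | v ∉ S}).ConnectedComponent,
        (c.supp.ncard : ℝ) ≤ β * t :=
  exists_seed_decomposition_general T t hT hcard r β hβ0
end

section
/- Let T be a tree with colour classes C_1, C_2 of sizes k_1, k_2, and let H = (X, Y) be a bipartite graph with deg(x) ≥ k_1 for all x ∈ X and deg(y) ≥ k_2 for all y ∈ Y. Then there is an embedding of T into H mapping C_1 into Y and C_2 into X. -/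
open SimpleGraph



lemma tree_exists_leaf {V : Type*} [Fintype V] {T : SimpleGraph V} [DecidableRel T.Adj]
    (hT : T.IsTree) (h2 : 2 ≤ Fintype.card V) : ∃ ℓ, T.degree ℓ = 1 := by
  classical
  by_contra hcon
  push_neg at hcon
  have hdeg : ∀ v, 2 ≤ T.degree v := by
    intro v
    have h1 : 0 < T.degree v := by
      rw [T.degree_pos_iff_exists_adj v]
      obtain ⟨w, hw⟩ := Fintype.exists_ne_of_one_lt_card h2 v
      obtain ⟨p⟩ := hT.isConnected.preconnected v w
      exact ⟨p.getVert 1, Walk.adj_snd (Walk.not_nil_of_ne (Ne.symm hw))⟩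
    have := hcon v
    omega
  have hsum : ∑ v, T.degree v = 2 * T.edgeFinset.card :=
    T.sum_degrees_eq_twice_card_edges
  have hE : T.edgeFinset.card + 1 = Fintype.card V := hT.card_edgeFinset
  have hle : Fintype.card V * 2 ≤ ∑ v, T.degree v := by
    calc Fintype.card V * 2 = ∑ _v : V, 2 := by rw [Finset.sum_const, Finset.card_univ, smul_eq_mul]
    _ ≤ ∑ v, T.degree v := Finset.sum_le_sum fun v _ => hdeg v
  omega


lemma leaf_not_mem_support {V : Type*} [Fintype V] {T : SimpleGraph V} [DecidableRel T.Adj]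
    {ℓ u v : V} (hd : T.degree ℓ = 1) (hu : u ≠ ℓ) (hv : v ≠ ℓ)
    {p : T.Walk u v} (hp : p.IsPath) : ℓ ∉ p.support := by
  classical
  intro h
  have hqp : (p.takeUntil ℓ h).IsPath := hp.takeUntil h
  have hrp : (p.dropUntil ℓ h).IsPath := hp.dropUntil h
  set q := p.takeUntil ℓ h with hqdef
  set r := p.dropUntil ℓ h with hrdef
  have hqn : ¬ q.reverse.Nil := Walk.not_nil_of_ne (Ne.symm hu)
  have hrn : ¬ r.Nil := Walk.not_nil_of_ne (Ne.symm hv)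
  set a := q.reverse.getVert 1 with hadef
  set b := r.getVert 1 with hbdef
  have ha : T.Adj ℓ a := Walk.adj_snd hqn
  have hb : T.Adj ℓ b := Walk.adj_snd hrn
  have hamem : a ∈ q.support := by
    have : a ∈ q.reverse.support :=
      Walk.mem_support_iff_exists_getVert.mpr ⟨1, rfl, by
        rw [Walk.length_reverse]
        have := (Walk.not_nil_iff_lt_length).mp hqn
        rw [Walk.length_reverse] at this
        omega⟩
    rwa [Walk.support_reverse, List.mem_reverse] at this
  have hbmem : b ∈ r.support.tail := by
    have hbs : b ∈ r.support :=
      Walk.mem_support_iff_exists_getVert.mpr ⟨1, rfl, (Walk.not_nil_iff_lt_length).mp hrn⟩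
    rw [Walk.support_eq_cons, List.mem_cons] at hbs
    rcases hbs with hbs | hbs
    · exact absurd hbs.symm hb.ne
    · exact hbs
  have hsupp : p.support = q.support ++ r.support.tail := by
    conv_lhs => rw [← Walk.take_spec p h]
    rw [Walk.support_append]
  have hnd := hp.support_nodup
  rw [hsupp, List.nodup_append] at hnd
  have hab : a ≠ b := fun hh => hnd.2.2 a hamem b hbmem hh
  have h2 : 1 < T.degree ℓ := by
    rw [← T.card_neighborFinset_eq_degree]
    exact Finset.one_lt_card.mpr
      ⟨a, (T.mem_neighborFinset ℓ a).mpr ha, b, (T.mem_neighborFinset ℓ b).mpr hb, hab⟩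
  omega


lemma reachable_induce_of_support {V : Type*} {T : SimpleGraph V} {s : Set V} :
    ∀ {u v : V} (p : T.Walk u v) (hs : ∀ x ∈ p.support, x ∈ s),
    (T.induce s).Reachable ⟨u, hs u p.start_mem_support⟩ ⟨v, hs v p.end_mem_support⟩ := by
  intro u v p
  induction p with
  | nil => exact fun _ => Reachable.refl _
  | @cons u w v h q ih =>
    intro hs
    have hs' : ∀ x ∈ q.support, x ∈ s := fun x hx => hs x (by simp [hx])
    have hadj : (T.induce s).Adj ⟨u, hs u (Walk.start_mem_support _)⟩
        ⟨w, hs' w q.start_mem_support⟩ := h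
    exact hadj.reachable.trans (ih hs')

lemma induce_isTree {V : Type*} [Fintype V] {T : SimpleGraph V} [DecidableRel T.Adj]
    (hT : T.IsTree) {ℓ : V} (hd : T.degree ℓ = 1) (h2 : 2 ≤ Fintype.card V)
    (hleaf : ∀ {u x : V} (hu : u ≠ ℓ) (hx : x ≠ ℓ) {p : T.Walk u x} (hp : p.IsPath),
      ℓ ∉ p.support) :
    (T.induce {v | v ≠ ℓ}).IsTree := by
  constructor
  · rw [connected_iff]
    constructor
    · rintro ⟨x, hx⟩ ⟨y, hy⟩
      obtain ⟨p, hp, -⟩ := hT.existsUnique_path x y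
      have hns := hleaf hx hy hp
      exact reachable_induce_of_support p fun z hz => by
        intro he
        exact hns (he ▸ hz)
    · obtain ⟨w, hw⟩ := Fintype.exists_ne_of_one_lt_card h2 ℓ
      exact ⟨⟨w, hw⟩⟩
  · intro v c hc
    exact hT.2 (c.map (Embedding.induce (G := T) {v | v ≠ ℓ}).toHom)
      (hc.map (Embedding.induce (G := T) {v | v ≠ ℓ}).injective)


lemma extend_embedding {V W : Type*} [Fintype V] [Fintype W]
    {T : SimpleGraph V} {H : SimpleGraph W}
    {ℓ pr : V} (hadj : T.Adj ℓ pr) (huniq : ∀ q, T.Adj ℓ q → q = pr)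
    (A B : Set V) (X Y : Set W) (kA : ℕ)
    (hABuniv : A ∪ B = Set.univ) (hAB : Disjoint A B)
    (hXYdisj : Disjoint X Y)
    (hbip : ∀ u v, H.Adj u v → u ∈ X → v ∈ Y)
    (hℓ : ℓ ∈ A) (hpB : pr ∈ B)
    (hkA : A.ncard = kA)
    (hdeg : ∀ x ∈ X, kA ≤ (H.neighborSet x).ncard)
    (f' : T.induce {v : V | v ≠ ℓ} →g H)
    (hinj : Function.Injective f')
    (hA : ∀ x : ↥{v : V | v ≠ ℓ}, ↑x ∈ A → f' x ∈ Y)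
    (hB : ∀ x : ↥{v : V | v ≠ ℓ}, ↑x ∈ B → f' x ∈ X) :
    ∃ f : T →g H, Function.Injective f ∧ (∀ v ∈ A, f v ∈ Y) ∧ (∀ v ∈ B, f v ∈ X) := by
  classical
  have hpℓ : pr ≠ ℓ := fun h => T.irrefl (h ▸ hadj)
  set p' : ↥{v : V | v ≠ ℓ} := ⟨pr, hpℓ⟩ with hp'def
  have hfp : f' p' ∈ X := hB p' hpB
  set img : Set W := f' '' {x : ↥{v : V | v ≠ ℓ} | ↑x ∈ A} with himgdef
  have hk1 : 1 ≤ kA := by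
    rw [← hkA]
    exact (Set.ncard_pos A.toFinite).mpr ⟨ℓ, hℓ⟩
  have himg : img.ncard < kA := by
    have h1 : img.ncard ≤ {x : ↥{v : V | v ≠ ℓ} | ↑x ∈ A}.ncard :=
      Set.ncard_image_le (Set.toFinite _)
    have h2 : {x : ↥{v : V | v ≠ ℓ} | ↑x ∈ A}.ncard = (A \ {ℓ}).ncard := by
      rw [← Set.ncard_image_of_injective _ Subtype.val_injective]
      congr 1
      ext z
      simp only [Set.mem_image, Set.mem_setOf_eq, Set.mem_diff, Set.mem_singleton_iff]
      constructor
      · rintro ⟨⟨x, hx⟩, hxa, rfl⟩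
        exact ⟨hxa, hx⟩
      · rintro ⟨hz, hzℓ⟩
        exact ⟨⟨z, hzℓ⟩, hz, rfl⟩
    have h3 : (A \ {ℓ}).ncard = kA - 1 := by
      rw [Set.ncard_diff_singleton_of_mem hℓ, hkA]
    omega
  have hne : (H.neighborSet (f' p') \ img).Nonempty := by
    by_contra he
    rw [Set.not_nonempty_iff_eq_empty, Set.diff_eq_empty] at he
    have := Set.ncard_le_ncard he img.toFinite
    have := hdeg _ hfp
    omega
  obtain ⟨w, hwadj, hwimg⟩ := hne
  have hwadj' : H.Adj (f' p') w := hwadj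
  have hwY : w ∈ Y := hbip _ _ hwadj' hfp
  have hwrange : ∀ x, f' x ≠ w := by
    intro x hx
    rcases (by rw [hABuniv]; trivial : (x : V) ∈ A ∪ B) with hxa | hxb
    · exact hwimg ⟨x, hxa, hx⟩
    · exact Set.disjoint_left.mp hXYdisj (hx ▸ hB x hxb) hwY
  set f : V → W := fun v => if h : v = ℓ then w else f' ⟨v, h⟩ with hfdef
  have hfℓ : f ℓ = w := by simp [hfdef]
  have hfne : ∀ (v : V) (h : v ≠ ℓ), f v = f' ⟨v, h⟩ := by
    intro v h
    simp [hfdef, h]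
  have hmap : ∀ u v, T.Adj u v → H.Adj (f u) (f v) := by
    intro u v huv
    by_cases hu : u = ℓ
    · by_cases hv : v = ℓ
      · exfalso
        rw [hu, hv] at huv
        exact T.irrefl huv
      · have hvp : v = pr := huniq v (by rwa [hu] at huv)
        rw [hu, hfℓ, hfne v hv]
        have he : (⟨v, hv⟩ : ↥{v : V | v ≠ ℓ}) = p' := Subtype.ext hvp
        rw [he]
        exact hwadj'.symm
    · by_cases hv : v = ℓ
      · have hup : u = pr := huniq u (by rw [hv] at huv; exact huv.symm)
        rw [hv, hfℓ, hfne u hu]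
        have he : (⟨u, hu⟩ : ↥{v : V | v ≠ ℓ}) = p' := Subtype.ext hup
        rw [he]
        exact hwadj'
      · rw [hfne u hu, hfne v hv]
        exact f'.map_adj (huv : (T.induce {v : V | v ≠ ℓ}).Adj ⟨u, hu⟩ ⟨v, hv⟩)
  refine ⟨⟨f, fun {a b} h => hmap a b h⟩, ?_, ?_, ?_⟩
  · intro a b hab
    have hab' : f a = f b := hab
    by_cases ha : a = ℓ
    · by_cases hb : b = ℓ
      · rw [ha, hb]
      · rw [ha, hfℓ, hfne b hb] at hab'
        exact absurd hab'.symm (hwrange _)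
    · by_cases hb : b = ℓ
      · rw [hb, hfℓ, hfne a ha] at hab'
        exact absurd hab' (hwrange _)
      · rw [hfne a ha, hfne b hb] at hab'
        exact congrArg Subtype.val (hinj hab')
  · intro v hv
    show f v ∈ Y
    by_cases h : v = ℓ
    · rw [h, hfℓ]
      exact hwY
    · rw [hfne v h]
      exact hA _ hv
  · intro v hv
    show f v ∈ X
    have h : v ≠ ℓ := fun he => Set.disjoint_left.mp hAB hℓ (he ▸ hv)
    rw [hfne v h]
    exact hB _ hv


lemma ncard_restrict_of_mem {V : Type*} [Fintype V] {A : Set V} {ℓ : V} (h : ℓ ∈ A) :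
    {x : ↥{v : V | v ≠ ℓ} | ↑x ∈ A}.ncard = A.ncard - 1 := by
  rw [← Set.ncard_image_of_injective _ (Subtype.val_injective
    (p := fun v => v ∈ {v : V | v ≠ ℓ}))]
  have himg : Subtype.val '' {x : ↥{v : V | v ≠ ℓ} | ↑x ∈ A} = A \ {ℓ} := by
    ext z
    simp only [Set.mem_image, Set.mem_setOf_eq, Set.mem_diff, Set.mem_singleton_iff]
    constructor
    · rintro ⟨⟨x, hx⟩, hxa, rfl⟩
      exact ⟨hxa, hx⟩
    · rintro ⟨hz, hzℓ⟩
      exact ⟨⟨z, hzℓ⟩, hz, rfl⟩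
  rw [himg, Set.ncard_diff_singleton_of_mem h]

lemma ncard_restrict_of_not_mem {V : Type*} [Fintype V] {A : Set V} {ℓ : V} (h : ℓ ∉ A) :
    {x : ↥{v : V | v ≠ ℓ} | ↑x ∈ A}.ncard = A.ncard := by
  rw [← Set.ncard_image_of_injective _ (Subtype.val_injective
    (p := fun v => v ∈ {v : V | v ≠ ℓ}))]
  have himg : Subtype.val '' {x : ↥{v : V | v ≠ ℓ} | ↑x ∈ A} = A := by
    ext z
    simp only [Set.mem_image, Set.mem_setOf_eq]
    constructor
    · rintro ⟨⟨x, hx⟩, hxa, rfl⟩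
      exact hxa
    · intro hz
      exact ⟨⟨z, fun he => h (he ▸ hz)⟩, hz, rfl⟩
  rw [himg]

lemma main_aux {W : Type*} [Fintype W] [Nonempty W] (H : SimpleGraph W) (X Y : Set W)
    (hXYuniv : X ∪ Y = Set.univ) (hXYdisj : Disjoint X Y)
    (hHbip : ∀ u v, H.Adj u v → (u ∈ X ∧ v ∈ Y) ∨ (u ∈ Y ∧ v ∈ X)) :
    ∀ (n : ℕ) (V : Type*) [Fintype V] (T : SimpleGraph V), T.IsTree →
    ∀ (C₁ C₂ : Set V) (k₁ k₂ : ℕ),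
      C₁ ∪ C₂ = Set.univ → Disjoint C₁ C₂ →
      (∀ u v, T.Adj u v → (u ∈ C₁ ∧ v ∈ C₂) ∨ (u ∈ C₂ ∧ v ∈ C₁)) →
      C₁.ncard = k₁ → C₂.ncard = k₂ →
      (∀ x ∈ X, k₁ ≤ (H.neighborSet x).ncard) →
      (∀ y ∈ Y, k₂ ≤ (H.neighborSet y).ncard) →
      Fintype.card V = n →
      ∃ f : T →g H, Function.Injective f ∧ (∀ v ∈ C₁, f v ∈ Y) ∧ (∀ v ∈ C₂, f v ∈ X) := by
  have hbipXY : ∀ u v, H.Adj u v → u ∈ X → v ∈ Y := by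
    intro u v huv hu
    rcases hHbip u v huv with ⟨_, hv⟩ | ⟨hu', _⟩
    · exact hv
    · exact absurd hu' (Set.disjoint_left.mp hXYdisj hu)
  have hbipYX : ∀ u v, H.Adj u v → u ∈ Y → v ∈ X := by
    intro u v huv hu
    rcases hHbip u v huv with ⟨hu', _⟩ | ⟨_, hv⟩
    · exact absurd hu (Set.disjoint_left.mp hXYdisj hu')
    · exact hv
  intro n
  induction n using Nat.strong_induction_on with
  | _ n ih =>
  intro V _fin T hT C₁ C₂ k₁ k₂ hCu hCd hCb hk1 hk2 hdX hdY hcard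
  classical
  have hVne : Nonempty V := hT.isConnected.nonempty
  by_cases h2 : 2 ≤ Fintype.card V
  swap
  · -- singleton case
    have hcard1 : Fintype.card V = 1 := by
      have := Fintype.card_pos (α := V)
      omega
    obtain ⟨v, hv⟩ := Fintype.card_eq_one_iff.mp hcard1
    have hmem : v ∈ C₁ ∪ C₂ := by rw [hCu]; trivial
    have hconst : ∀ (y : W), ∃ f : T →g H, ∀ u, f u = y := by
      intro y
      refine ⟨⟨fun _ => y, ?_⟩, fun _ => rfl⟩
      intro a b hab
      exfalso
      have : a = b := (hv a).trans (hv b).symm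
      rw [this] at hab
      exact T.irrefl hab
    rcases hmem with hv1 | hv2
    · -- need some y ∈ Y
      have hk1pos : 1 ≤ k₁ := by
        rw [← hk1]
        exact (Set.ncard_pos C₁.toFinite).mpr ⟨v, hv1⟩
      obtain ⟨y, hy⟩ : ∃ y, y ∈ Y := by
        obtain ⟨w₀⟩ := ‹Nonempty W›
        rcases (by rw [hXYuniv]; trivial : w₀ ∈ X ∪ Y) with hw | hw
        · have := hdX w₀ hw
          have hne : (H.neighborSet w₀).Nonempty := by
            apply Set.nonempty_of_ncard_ne_zero
            omega
          obtain ⟨z, hz⟩ := hne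
          exact ⟨z, hbipXY w₀ z hz hw⟩
        · exact ⟨w₀, hw⟩
      obtain ⟨f, hf⟩ := hconst y
      refine ⟨f, ?_, ?_, ?_⟩
      · intro a b _
        exact (hv a).trans (hv b).symm
      · intro u _
        rw [hf]
        exact hy
      · intro u hu
        exfalso
        have : u = v := hv u
        exact Set.disjoint_left.mp hCd hv1 (this ▸ hu)
    · have hk2pos : 1 ≤ k₂ := by
        rw [← hk2]
        exact (Set.ncard_pos C₂.toFinite).mpr ⟨v, hv2⟩
      obtain ⟨y, hy⟩ : ∃ y, y ∈ X := by
        obtain ⟨w₀⟩ := ‹Nonempty W›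
        rcases (by rw [hXYuniv]; trivial : w₀ ∈ X ∪ Y) with hw | hw
        · exact ⟨w₀, hw⟩
        · have := hdY w₀ hw
          have hne : (H.neighborSet w₀).Nonempty := by
            apply Set.nonempty_of_ncard_ne_zero
            omega
          obtain ⟨z, hz⟩ := hne
          exact ⟨z, hbipYX w₀ z hz hw⟩
      obtain ⟨f, hf⟩ := hconst y
      refine ⟨f, ?_, ?_, ?_⟩
      · intro a b _
        exact (hv a).trans (hv b).symm
      · intro u hu
        exfalso
        have : u = v := hv u
        exact Set.disjoint_left.mp hCd (this ▸ hu) hv2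
      · intro u _
        rw [hf]
        exact hy
  · -- main case: find a leaf
    obtain ⟨ℓ, hdℓ⟩ := tree_exists_leaf hT h2
    obtain ⟨pr, hpr⟩ : ∃ pr, T.neighborFinset ℓ = {pr} := by
      apply Finset.card_eq_one.mp
      rw [T.card_neighborFinset_eq_degree, hdℓ]
    have hadj : T.Adj ℓ pr := by
      rw [← T.mem_neighborFinset, hpr]
      exact Finset.mem_singleton_self pr
    have huniq : ∀ q, T.Adj ℓ q → q = pr := by
      intro q hq
      have : q ∈ T.neighborFinset ℓ := (T.mem_neighborFinset ℓ q).mpr hq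
      rwa [hpr, Finset.mem_singleton] at this
    have hT' : (T.induce {v : V | v ≠ ℓ}).IsTree :=
      induce_isTree hT hdℓ h2
        (fun {u x} hu hx {p} hp => leaf_not_mem_support hdℓ hu hx hp)
    have hcard' : Fintype.card ↥{v : V | v ≠ ℓ} = n - 1 := by
      have hs_eq : {v : V | v ≠ ℓ} = (Set.univ : Set V) \ {ℓ} := by
        ext z; simp
      rw [← Nat.card_eq_fintype_card, Nat.card_coe_set_eq, hs_eq,
        Set.ncard_diff_singleton_of_mem (Set.mem_univ ℓ),
        Set.ncard_univ, Nat.card_eq_fintype_card, hcard]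
    have hlt : n - 1 < n := by omega
    set C₁' : Set ↥{v : V | v ≠ ℓ} := {x | ↑x ∈ C₁} with hC1'def
    set C₂' : Set ↥{v : V | v ≠ ℓ} := {x | ↑x ∈ C₂} with hC2'def
    have hCu' : C₁' ∪ C₂' = Set.univ := by
      ext x
      simp only [Set.mem_union, hC1'def, hC2'def, Set.mem_setOf_eq, Set.mem_univ, iff_true]
      have : (x : V) ∈ C₁ ∪ C₂ := by rw [hCu]; trivial
      exact this
    have hCd' : Disjoint C₁' C₂' := by
      rw [Set.disjoint_left]
      intro x hx1 hx2
      exact Set.disjoint_left.mp hCd hx1 hx2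
    have hCb' : ∀ u v, (T.induce {v : V | v ≠ ℓ}).Adj u v →
        (u ∈ C₁' ∧ v ∈ C₂') ∨ (u ∈ C₂' ∧ v ∈ C₁') := by
      intro u v huv
      exact hCb ↑u ↑v huv
    rcases (by rw [hCu]; trivial : ℓ ∈ C₁ ∪ C₂) with hℓ1 | hℓ2
    · -- ℓ ∈ C₁; pr ∈ C₂
      have hprC2 : pr ∈ C₂ := by
        rcases hCb ℓ pr hadj with ⟨_, h⟩ | ⟨h, _⟩
        · exact h
        · exact absurd h (Set.disjoint_left.mp hCd hℓ1)
      have hk1' : C₁'.ncard = k₁ - 1 := by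
        rw [hC1'def, ncard_restrict_of_mem hℓ1, hk1]
      have hk2' : C₂'.ncard = k₂ := by
        rw [hC2'def, ncard_restrict_of_not_mem (Set.disjoint_left.mp hCd hℓ1), hk2]
      obtain ⟨f', hinj, hf1, hf2⟩ := ih (n - 1) hlt ↥{v : V | v ≠ ℓ} _ hT'
        C₁' C₂' (k₁ - 1) k₂ hCu' hCd' hCb' hk1' hk2'
        (fun x hx => le_trans (Nat.sub_le k₁ 1) (hdX x hx)) hdY hcard'
      exact extend_embedding hadj huniq C₁ C₂ X Y k₁ hCu hCd hXYdisj hbipXY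
        hℓ1 hprC2 hk1 hdX f' hinj hf1 hf2
    · -- ℓ ∈ C₂; pr ∈ C₁
      have hprC1 : pr ∈ C₁ := by
        rcases hCb ℓ pr hadj with ⟨h, _⟩ | ⟨_, h⟩
        · exact absurd hℓ2 (Set.disjoint_left.mp hCd h)
        · exact h
      have hk1' : C₁'.ncard = k₁ := by
        rw [hC1'def, ncard_restrict_of_not_mem
          (fun hc => Set.disjoint_left.mp hCd hc hℓ2), hk1]
      have hk2' : C₂'.ncard = k₂ - 1 := by
        rw [hC2'def, ncard_restrict_of_mem hℓ2, hk2]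
      obtain ⟨f', hinj, hf1, hf2⟩ := ih (n - 1) hlt ↥{v : V | v ≠ ℓ} _ hT'
        C₁' C₂' k₁ (k₂ - 1) hCu' hCd' hCb' hk1' hk2' hdX
        (fun y hy => le_trans (Nat.sub_le k₂ 1) (hdY y hy)) hcard'
      obtain ⟨f, hfinj, hfa, hfb⟩ := extend_embedding hadj huniq C₂ C₁ Y X k₂
        (by rw [Set.union_comm]; exact hCu) hCd.symm hXYdisj.symm hbipYX
        hℓ2 hprC1 hk2 hdY f' hinj hf2 hf1
      exact ⟨f, hfinj, hfb, hfa⟩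

/-- If `T` is a tree with bipartition classes `C₁, C₂` of sizes `k₁, k₂`, and
`H` is a bipartite graph with parts `X, Y` such that every vertex of `X` has degree
at least `k₁` and every vertex of `Y` has degree at least `k₂`, then `T` embeds into
`H` with `C₁` mapped into `Y` and `C₂` mapped into `X`. -/
theorem tree_embeds_into_bipartite {V W : Type*} [Fintype V] [Fintype W] [Nonempty W]
    (T : SimpleGraph V) (hT : T.IsTree)
    (C₁ C₂ : Set V) (k₁ k₂ : ℕ)
    (hCuniv : C₁ ∪ C₂ = Set.univ) (hCdisj : Disjoint C₁ C₂)
    (hCbip : ∀ u v, T.Adj u v → (u ∈ C₁ ∧ v ∈ C₂) ∨ (u ∈ C₂ ∧ v ∈ C₁))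
    (hk₁ : C₁.ncard = k₁) (hk₂ : C₂.ncard = k₂)
    (H : SimpleGraph W) (X Y : Set W)
    (hXYuniv : X ∪ Y = Set.univ) (hXYdisj : Disjoint X Y)
    (hHbip : ∀ u v, H.Adj u v → (u ∈ X ∧ v ∈ Y) ∨ (u ∈ Y ∧ v ∈ X))
    (hdegX : ∀ x ∈ X, k₁ ≤ (H.neighborSet x).ncard)
    (hdegY : ∀ y ∈ Y, k₂ ≤ (H.neighborSet y).ncard) :
    ∃ f : T →g H, Function.Injective f ∧
      (∀ v ∈ C₁, f v ∈ Y) ∧ (∀ v ∈ C₂, f v ∈ X) :=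
  main_aux H X Y hXYuniv hXYdisj hHbip (Fintype.card V) V T hT C₁ C₂ k₁ k₂
    hCuniv hCdisj hCbip hk₁ hk₂ hdegX hdegY rfl
end

section
/- Let k ≥ 1 and let G be a graph with minimum degree at least k/2 and maximum degree at least 2k. Then G contains every path with k edges as a subgraph. -/
/-!
Grow a path through a vertex `v` of degree at least `k` one edge at a time. Let `p` be such a
path with `m < k` edges from `a` to `b`. If `a` or `b` has a neighbour off `p`, extend at that end.
Otherwise both neighbourhoods lie on `p`, and since `deg a + deg b ≥ k > m` the pigeonhole
principle gives an index `i` with `a ~ pᵢ₊₁` and `b ~ pᵢ`, closing the vertices of `p` into a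
cycle. Since `deg v > m`, `v` has a neighbour `w` off this cycle; opening the cycle at `v` and
appending `w` gives a path with `m + 1` edges through `v`.
-/

open Finset

theorem Set.ncard_le_card_filter_range {α : Type*} {s : Set α} [DecidablePred (· ∈ s)]
    {f : ℕ → α} {n : ℕ} (h : ∀ z ∈ s, ∃ i < n, f i = z) :
    s.ncard ≤ #{i ∈ Finset.range n | f i ∈ s} := by
  have hsub : s ⊆ f '' ↑({i ∈ Finset.range n | f i ∈ s} : Finset ℕ) := by
    intro z hz
    obtain ⟨i, hi, rfl⟩ := h z hz
    exact ⟨i, by simp [hi, hz], rfl⟩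
  exact (Set.ncard_le_ncard hsub (Set.toFinite _)).trans <|
    (Set.ncard_image_le (Finset.finite_toSet _)).trans (Set.ncard_coe_finset _).le

namespace SimpleGraph.Walk

variable {V : Type*} {G : SimpleGraph V}

open scoped List

theorem ncard_neighborSet_le_length {a s t : V} {p : G.Walk s t} (ha : a ∈ p.support)
    (h : ∀ z, G.Adj a z → z ∈ p.support) : (G.neighborSet a).ncard ≤ p.length := by
  classical
  have hsub : G.neighborSet a ⊆ ↑(p.support.toFinset.erase a) := fun z hz => by
    simpa [h z hz] using (G.ne_of_adj hz).symm
  calc (G.neighborSet a).ncard ≤ (p.support.toFinset.erase a).card :=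
        (Set.ncard_le_ncard hsub (Set.toFinite _)).trans_eq (Set.ncard_coe_finset _)
    _ = p.support.toFinset.card - 1 := Finset.card_erase_of_mem (by simpa using ha)
    _ ≤ p.support.length - 1 := Nat.sub_le_sub_right p.support.toFinset_card_le 1
    _ = p.length := by simp

theorem ncard_neighborSet_start_le {a b : V} {p : G.Walk a b} [DecidableRel G.Adj]
    (h : ∀ z, G.Adj a z → z ∈ p.support) :
    (G.neighborSet a).ncard ≤ #{i ∈ range p.length | G.Adj a (p.getVert (i + 1))} := by
  classical
  refine (Set.ncard_le_card_filter_range (f := fun i => p.getVert (i + 1))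
    fun z hz => ?_).trans_eq (by congr!)
  obtain ⟨j, rfl, hj⟩ := mem_support_iff_exists_getVert.mp (h z hz)
  have hj0 : j ≠ 0 := by
    rintro rfl
    simp at hz
  exact ⟨j - 1, by omega, by rw [Nat.sub_add_cancel (Nat.pos_of_ne_zero hj0)]⟩

theorem ncard_neighborSet_end_le {a b : V} {p : G.Walk a b} [DecidableRel G.Adj]
    (h : ∀ z, G.Adj b z → z ∈ p.support) :
    (G.neighborSet b).ncard ≤ #{i ∈ range p.length | G.Adj b (p.getVert i)} := by
  classical
  refine (Set.ncard_le_card_filter_range (f := p.getVert) fun z hz => ?_).trans_eq (by congr!)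
  obtain ⟨j, rfl, hj⟩ := mem_support_iff_exists_getVert.mp (h z hz)
  have hjlen : j ≠ p.length := by
    rintro rfl
    simp at hz
  exact ⟨j, by omega, rfl⟩

theorem exists_crossing_of_length_lt {a b : V} {p : G.Walk a b}
    (ha : ∀ z, G.Adj a z → z ∈ p.support) (hb : ∀ z, G.Adj b z → z ∈ p.support)
    (hlen : p.length < (G.neighborSet a).ncard + (G.neighborSet b).ncard) :
    ∃ i < p.length, G.Adj a (p.getVert (i + 1)) ∧ G.Adj b (p.getVert i) := by
  classical
  obtain ⟨i, hi⟩ := inter_nonempty_of_card_lt_card_add_card (filter_subset _ _)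
    (filter_subset _ _) <| (card_range _).trans_lt <| hlen.trans_le <|
    add_le_add (ncard_neighborSet_start_le ha) (ncard_neighborSet_end_le hb)
  simp only [mem_inter, mem_filter, mem_range] at hi
  exact ⟨i, hi.1.1, hi.1.2, hi.2.2⟩

theorem exists_support_tail_perm_of_crossing {a b : V} {p : G.Walk a b} {i : ℕ}
    (hi : i < p.length) (ha : G.Adj a (p.getVert (i + 1))) (hb : G.Adj b (p.getVert i)) :
    ∃ c : G.Walk a a, c.support.tail ~ p.support := by
  -- the cycle `a ⋯ pᵢ b ⋯ pᵢ₊₁ a` of Pósa's rotation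
  let c := (p.take i).append (cons hb.symm ((p.drop (i + 1)).reverse.concat ha.symm))
  refine ⟨c, (List.perm_cons a).mp ?_⟩
  rw [cons_tail_support]
  have : c.support = p.support.take (i + 1) ++ (p.support.drop (i + 1)).reverse ++ [a] := by
    simp [c, support_append, support_take, support_concat, Nat.min_eq_left hi]
  rw [this]
  calc _ ~ p.support.take (i + 1) ++ p.support.drop (i + 1) ++ [a] :=
        ((List.reverse_perm _).append_left _).append_right _
    _ = p.support ++ [a] := by rw [List.take_append_drop]
    _ ~ a :: p.support := List.perm_append_singleton _ _

theorem exists_isPath_support_perm {u v : V} {c : G.Walk u u} (hc : c.support.tail.Nodup)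
    (hv : v ∈ c.support.tail) :
    ∃ (x : V) (q : G.Walk x v), q.IsPath ∧ q.support ~ c.support.tail := by
  classical
  have hnil : ¬ c.Nil := fun h => by simp [nil_iff_support_eq.mp h] at hv
  let c' := c.rotate v (List.mem_of_mem_tail hv)
  have hperm : c'.tail.support ~ c.support.tail := by
    rw [support_tail_of_not_nil _ (by simpa [c'] using hnil)]
    exact (support_rotate c v _).perm
  exact ⟨_, c'.tail, IsPath.mk' (hperm.nodup_iff.mpr hc), hperm⟩

theorem IsPath.exists_isPath_length_succ_of_crossing {a b v w : V} {p : G.Walk a b}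
    (hp : p.IsPath) {i : ℕ} (hi : i < p.length) (ha : G.Adj a (p.getVert (i + 1)))
    (hb : G.Adj b (p.getVert i)) (hv : v ∈ p.support) (hvw : G.Adj v w)
    (hw : w ∉ p.support) :
    ∃ (x : V) (q : G.Walk x w), q.IsPath ∧ q.length = p.length + 1 ∧ v ∈ q.support := by
  obtain ⟨c, hc⟩ := exists_support_tail_perm_of_crossing hi ha hb
  obtain ⟨x, q, hq, hqc⟩ :=
    exists_isPath_support_perm (hc.nodup_iff.mpr hp.support_nodup) (hc.mem_iff.mpr hv)
  have hqp : q.support ~ p.support := hqc.trans hc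
  refine ⟨x, q.concat hvw, hq.concat (mt hqp.mem_iff.mp hw) hvw, ?_, ?_⟩
  · simpa using hqp.length_eq
  · simp [support_concat]

theorem IsPath.exists_isPath_length_succ {a b v : V} {p : G.Walk a b} (hp : p.IsPath)
    (hv : v ∈ p.support) (hab : p.length < (G.neighborSet a).ncard + (G.neighborSet b).ncard)
    (hvdeg : p.length < (G.neighborSet v).ncard) :
    ∃ (s t : V) (q : G.Walk s t), q.IsPath ∧ q.length = p.length + 1 ∧ v ∈ q.support := by
  by_cases! ha : ∃ z, G.Adj a z ∧ z ∉ p.support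
  · obtain ⟨z, haz, hz⟩ := ha
    exact ⟨z, b, cons haz.symm p, hp.cons hz, rfl, by simp [hv]⟩
  by_cases! hb : ∃ z, G.Adj b z ∧ z ∉ p.support
  · obtain ⟨z, hbz, hz⟩ := hb
    exact ⟨z, a, cons hbz.symm p.reverse, hp.reverse.cons (by simpa using hz), by simp,
      by simp [hv]⟩
  obtain ⟨i, hi, hai, hbi⟩ := exists_crossing_of_length_lt ha hb hab
  by_cases! hvw : ∃ w, G.Adj v w ∧ w ∉ p.support
  · obtain ⟨w, hvw, hw⟩ := hvw
    obtain ⟨x, q, hq⟩ := hp.exists_isPath_length_succ_of_crossing hi hai hbi hv hvw hw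
    exact ⟨x, w, q, hq⟩
  exact absurd (ncard_neighborSet_le_length hv hvw) hvdeg.not_ge

end SimpleGraph.Walk

namespace SimpleGraph

variable {V : Type*} {G : SimpleGraph V}

theorem exists_isPath_length_eq_mem_support {k : ℕ}
    (hmin : ∀ u, k ≤ 2 * (G.neighborSet u).ncard) {v : V} (hv : k ≤ (G.neighborSet v).ncard) :
    ∀ m ≤ k, ∃ (a b : V) (p : G.Walk a b), p.IsPath ∧ p.length = m ∧ v ∈ p.support
  | 0, _ => ⟨v, v, .nil, .nil, rfl, by simp⟩
  | m + 1, hm => by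
    obtain ⟨a, b, p, hp, rfl, hvp⟩ := exists_isPath_length_eq_mem_support hmin hv m (by omega)
    have hka := hmin a
    have hkb := hmin b
    exact hp.exists_isPath_length_succ hvp (by omega) (by omega)

end SimpleGraph

theorem path_of_min_max_degree_general {V : Type*}
    (G : SimpleGraph V) (k : ℕ)
    (hmin : ∀ v, k ≤ 2 * (G.neighborSet v).ncard)
    (hmax : ∃ v, 2 * k ≤ (G.neighborSet v).ncard) :
    ∃ (u v : V) (p : G.Walk u v), p.IsPath ∧ p.length = k := by
  obtain ⟨v, hv⟩ := hmax
  have hv' : k ≤ (G.neighborSet v).ncard := by omega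
  obtain ⟨a, b, p, hp, hlen, -⟩ := G.exists_isPath_length_eq_mem_support hmin hv' k le_rfl
  exact ⟨a, b, p, hp, hlen⟩

/-- If `k ≥ 1` and `G` has minimum degree at least `k/2` and maximum degree at least
`2k`, then `G` contains a path with `k` edges. -/
theorem path_of_min_max_degree {V : Type*} [Fintype V]
    (G : SimpleGraph V) (k : ℕ) (hk : 1 ≤ k)
    (hmin : ∀ v, k ≤ 2 * (G.neighborSet v).ncard)
    (hmax : ∃ v, 2 * k ≤ (G.neighborSet v).ncard) :
    ∃ (u v : V) (p : G.Walk u v), p.IsPath ∧ p.length = k :=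
  path_of_min_max_degree_general G k hmin hmax
end

section
/- Let t ≥ 4 with t divisible by 4, and let T be the tree obtained by identifying the center of a star on t/2 vertices with an endvertex of a path on t/2 + 2 vertices. Let z be any vertex of T such that every component of T − z has at most ⌈t/2⌉ vertices. Then z is the unique such vertex, T − z has exactly two components (a path on t/2 vertices and a star on t/2 vertices), and every proper 2-colouring of T − z has a colour class with at least 3t/4 − 1 vertices. -/
/-!
Write `p i` for the path vertices. Deleting `z = p 1` leaves the path `p 2, …, p (t/2 + 1)` and
the star formed by `p 0` and its leaves, each on `t/2` vertices. Any other choice of `z` leaves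
a connected subgraph on `t/2 + 1` vertices: the star at `p 0` with leaves `p 1` and the old
leaves if `z` lies beyond `p 1`, and the path `p 1, …, p (t/2 + 1)` otherwise. In a proper
2-colouring of `T - p 1` the leaves all get the colour opposite to `p 0`, and the path, having
an even number `t/2` of vertices, is split evenly between the two colours; so that colour
class has `(t/2 - 1) + t/4` vertices.
-/

/-- The tree on `t+1` vertices obtained by identifying the center of a star on `t/2`
vertices with an endvertex of a path on `t/2 + 2` vertices: the path vertices are
`Fin (t/2 + 2)` (consecutive vertices adjacent), and the star leaves `Fin (t/2 - 1)`
are all adjacent to path vertex `0`. -/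
def starPathTree (t : ℕ) : SimpleGraph (Fin (t / 2 + 2) ⊕ Fin (t / 2 - 1)) :=
  SimpleGraph.fromRel (fun u v =>
    match u, v with
    | Sum.inl i, Sum.inl j => (i : ℕ) + 1 = (j : ℕ)
    | Sum.inl i, Sum.inr _ => (i : ℕ) = 0
    | _, _ => False)

open SimpleGraph Function

namespace SimpleGraph

variable {V W L : Type*} {G : SimpleGraph V} {H : SimpleGraph W}

theorem Reachable.mem_of_adj_closed {s : Set V} (hs : ∀ ⦃x y⦄, G.Adj x y → x ∈ s → y ∈ s)
    {u v : V} (huv : G.Reachable u v) (hu : u ∈ s) : v ∈ s := by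
  rw [reachable_iff_reflTransGen] at huv
  induction huv with
  | refl => exact hu
  | tail _ hadj ih => exact hs hadj ih

theorem Connected.range_subset_supp (hH : H.Connected) (f : H →g G) (w : W) :
    Set.range f ⊆ (G.connectedComponentMk (f w)).supp := by
  rintro _ ⟨x, rfl⟩
  exact ConnectedComponent.sound ((hH.preconnected x w).map f)

theorem Connected.exists_supp_eq_range (hH : H.Connected) (f : H →g G)
    (hclosed : ∀ ⦃x y⦄, G.Adj x y → x ∈ Set.range f → y ∈ Set.range f) :
    ∃ c : G.ConnectedComponent, c.supp = Set.range f := by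
  obtain ⟨w⟩ := hH.nonempty
  refine ⟨G.connectedComponentMk (f w), Set.Subset.antisymm (fun v hv => ?_)
    (hH.range_subset_supp f w)⟩
  exact (ConnectedComponent.exact hv).symm.mem_of_adj_closed hclosed ⟨w, rfl⟩

theorem Connected.card_le_ncard_supp [Finite V] (hH : H.Connected) (f : H →g G)
    (hf : Injective f) (w : W) : Nat.card W ≤ (G.connectedComponentMk (f w)).supp.ncard := by
  rw [← Set.ncard_range_of_injective hf]
  exact Set.ncard_le_ncard (hH.range_subset_supp f w)

theorem completeBipartiteGraph_connected_of_unique [Unique V] :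
    (completeBipartiteGraph V W).Connected := by
  refine (connected_iff_exists_forall_reachable _).mpr ⟨.inl default, ?_⟩
  rintro (v | w)
  · rw [Unique.eq_default v]
  · exact Adj.reachable (by simp)

def Embedding.codRestrict (f : H ↪g G) (s : Set V) (hs : ∀ w, f w ∈ s) : H ↪g G.induce s where
  toFun w := ⟨f w, hs w⟩
  inj' _ _ h := f.injective (congrArg Subtype.val h)
  map_rel_iff' := f.map_rel_iff

section star

variable (c : V) (ℓ : L ↪ V) (hadj : ∀ l, G.Adj c (ℓ l)) (hnadj : ∀ l l', ¬G.Adj (ℓ l) (ℓ l'))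

def Embedding.star : completeBipartiteGraph PUnit L ↪g G where
  toFun := Sum.elim (fun _ => c) ℓ
  inj' := by
    rintro (_ | l) (_ | l') h
    · rfl
    · exact absurd h (hadj l').ne
    · exact absurd h.symm (hadj l).ne
    · exact congrArg Sum.inr (ℓ.injective h)
  map_rel_iff' {x y} := by
    change G.Adj (Sum.elim _ ℓ x) (Sum.elim _ ℓ y) ↔ _
    rcases x with _ | l <;> rcases y with _ | l' <;> simp [hadj, hnadj, (hadj _).symm]

@[simp] theorem Embedding.star_inl (u : PUnit) : Embedding.star c ℓ hadj hnadj (.inl u) = c :=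
  rfl

@[simp] theorem Embedding.star_inr (l : L) : Embedding.star c ℓ hadj hnadj (.inr l) = ℓ l :=
  rfl

end star

theorem two_mul_ncard_colorClass_pathGraph {n : ℕ} (hn : Even n)
    (C : (pathGraph n).Coloring Bool) (b : Bool) : 2 * (C.colorClass b).ncard = n := by
  -- the pairing `2j ↔ 2j+1` swaps the two colour classes
  let σ : Fin n → Fin n := fun i => ⟨if i.val % 2 = 0 then i + 1 else i - 1, by
    obtain ⟨k, rfl⟩ := hn; split_ifs <;> omega⟩
  have hσ : ∀ i, (pathGraph n).Adj i (σ i) := fun i => by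
    rw [pathGraph_adj]; simp only [σ]; split_ifs <;> omega
  have hσ_inj : Injective σ := fun i j h => by
    simp only [σ, Fin.ext_iff] at h ⊢; split_ifs at h <;> omega
  have hswap : ∀ b, (C.colorClass b).ncard ≤ (C.colorClass (!b)).ncard := fun b =>
    Set.ncard_le_ncard_of_injOn σ (fun i (hi : C i = b) => by
      show C (σ i) = !b
      rw [← hi]; exact Bool.eq_not.mpr (C.valid (hσ i)).symm) hσ_inj.injOn
  have hcompl : C.colorClass (!b) = (C.colorClass b)ᶜ := by
    ext i; simp only [Coloring.colorClass, Set.mem_compl_iff, Set.mem_ofPred_eq]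
    cases C i <;> cases b <;> simp
  have hsum := Set.ncard_add_ncard_compl (C.colorClass b)
  rw [← hcompl, Nat.card_eq_fintype_card, Fintype.card_fin] at hsum
  have := hswap (!b)
  rw [Bool.not_not] at this
  have := hswap b
  omega

end SimpleGraph

namespace starPathTree

variable {t : ℕ}

@[simp] theorem adj_inl_inl {i j : Fin (t / 2 + 2)} :
    (starPathTree t).Adj (.inl i) (.inl j) ↔ (i : ℕ) + 1 = j ∨ (j : ℕ) + 1 = i := by
  simp only [starPathTree, fromRel_adj, ne_eq, Sum.inl.injEq, Fin.ext_iff, and_iff_right_iff_imp]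
  omega

@[simp] theorem adj_inl_inr {i : Fin (t / 2 + 2)} {l : Fin (t / 2 - 1)} :
    (starPathTree t).Adj (.inl i) (.inr l) ↔ (i : ℕ) = 0 := by
  simp [starPathTree]

@[simp] theorem adj_inr_inl {i : Fin (t / 2 + 2)} {l : Fin (t / 2 - 1)} :
    (starPathTree t).Adj (.inr l) (.inl i) ↔ (i : ℕ) = 0 := by
  simp [starPathTree]

@[simp] theorem not_adj_inr_inr {l l' : Fin (t / 2 - 1)} :
    ¬(starPathTree t).Adj (.inr l) (.inr l') := by
  simp [starPathTree]

def spine (a n : ℕ) (h : a + n ≤ t / 2 + 2) : pathGraph n ↪g starPathTree t where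
  toFun i := .inl ⟨a + i, by omega⟩
  inj' i j hij := by simpa [Fin.ext_iff] using hij
  map_rel_iff' {i j} := by
    change (starPathTree t).Adj (.inl ⟨a + i, _⟩) (.inl ⟨a + j, _⟩) ↔ _
    simp only [adj_inl_inl, pathGraph_adj]
    omega

@[simp] theorem spine_apply (a n : ℕ) (h : a + n ≤ t / 2 + 2) (i : Fin n) :
    spine a n h i = .inl ⟨a + i, by omega⟩ :=
  rfl

theorem eq_inl_one_of_forall_ncard_supp_le {z : Fin (t / 2 + 2) ⊕ Fin (t / 2 - 1)}
    (hz : ∀ c : ((starPathTree t).induce {v | v ≠ z}).ConnectedComponent,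
      c.supp.ncard ≤ t / 2) :
    z = .inl 1 := by
  have hsmall {W : Type} [Finite W] {H : SimpleGraph W} (hH : H.Connected)
      (f : H ↪g (starPathTree t).induce {v | v ≠ z}) : Nat.card W ≤ t / 2 :=
    (hH.card_le_ncard_supp f.toHom f.injective hH.nonempty.some).trans (hz _)
  by_contra hne
  by_cases hfar : ∃ a : Fin (t / 2 + 2), 2 ≤ (a : ℕ) ∧ z = .inl a
  · obtain ⟨a, ha, rfl⟩ := hfar
    let ℓ : Option (Fin (t / 2 - 1)) ↪ Fin (t / 2 + 2) ⊕ Fin (t / 2 - 1) :=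
      Embedding.inr.optionElim (.inl 1) (by simp)
    have hstar := hsmall (completeBipartiteGraph_connected_of_unique (V := PUnit))
      ((Embedding.star (.inl 0) ℓ (by rintro (_ | l) <;> simp [ℓ]) (by
          rintro (_ | l) (_ | l') <;> simp [ℓ])).codRestrict _ (by
          rintro (_ | _ | l)
          · exact Sum.inl_injective.ne (Fin.ne_of_val_ne (by rw [Fin.val_zero]; omega))
          · exact Sum.inl_injective.ne (Fin.ne_of_val_ne (by rw [Fin.val_one]; omega))
          · exact Sum.inr_ne_inl))
    simp only [Nat.card_eq_fintype_card, Fintype.card_sum, Fintype.card_unique,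
      Fintype.card_option, Fintype.card_fin] at hstar
    omega
  · have hpath := hsmall (pathGraph_connected (t / 2))
      ((spine 1 (t / 2 + 1) (by omega)).codRestrict _ (by
        rintro i rfl
        rw [spine_apply] at hne hfar
        refine hfar ⟨_, ?_, rfl⟩
        simp only [Sum.inl.injEq, Fin.ext_iff, Fin.val_one] at hne ⊢
        omega))
    simp only [Nat.card_eq_fintype_card, Fintype.card_fin] at hpath
    omega

variable (t) in
def pathPart : pathGraph (t / 2) ↪g (starPathTree t).induce {v | v ≠ .inl 1} :=
  (spine 2 (t / 2) (by omega)).codRestrict _ fun i => by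
    simp only [spine_apply, Set.mem_ofPred_eq, ne_eq, Sum.inl.injEq, Fin.ext_iff, Fin.val_one]
    omega

variable (t) in
def starPart :
    completeBipartiteGraph PUnit (Fin (t / 2 - 1)) ↪g (starPathTree t).induce {v | v ≠ .inl 1} :=
  (Embedding.star (.inl 0) Embedding.inr (by simp) (by simp)).codRestrict _ (by
    rintro (_ | l) <;> simp)

@[simp] theorem coe_pathPart_apply (i : Fin (t / 2)) :
    (pathPart t i : Fin (t / 2 + 2) ⊕ Fin (t / 2 - 1)) = .inl ⟨2 + i, by omega⟩ :=
  rfl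

@[simp] theorem coe_starPart_apply_inl (u : PUnit) :
    (starPart t (.inl u) : Fin (t / 2 + 2) ⊕ Fin (t / 2 - 1)) = .inl 0 :=
  rfl

@[simp] theorem coe_starPart_apply_inr (l : Fin (t / 2 - 1)) :
    (starPart t (.inr l) : Fin (t / 2 + 2) ⊕ Fin (t / 2 - 1)) = .inr l :=
  rfl

theorem range_pathPart_adj_closed ⦃x y⦄
    (hxy : ((starPathTree t).induce {v | v ≠ .inl 1}).Adj x y)
    (hx : x ∈ Set.range (pathPart t)) : y ∈ Set.range (pathPart t) := by
  obtain ⟨i, rfl⟩ := hx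
  obtain ⟨j | l, hy⟩ := y
  · simp only [comap_adj, Embedding.coe_subtype, coe_pathPart_apply, adj_inl_inl] at hxy
    simp only [Set.mem_ofPred_eq, ne_eq, Sum.inl.injEq, Fin.ext_iff, Fin.val_one] at hy
    exact ⟨⟨j - 2, by omega⟩, Subtype.ext (by
      simp only [coe_pathPart_apply, Sum.inl.injEq, Fin.ext_iff]; omega)⟩
  · simp at hxy

theorem range_starPart_adj_closed ⦃x y⦄
    (hxy : ((starPathTree t).induce {v | v ≠ .inl 1}).Adj x y)
    (hx : x ∈ Set.range (starPart t)) : y ∈ Set.range (starPart t) := by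
  obtain ⟨_ | l, rfl⟩ := hx <;> obtain ⟨j | l', hy⟩ := y
  · simp only [comap_adj, Embedding.coe_subtype, coe_starPart_apply_inl, adj_inl_inl,
      Fin.val_zero] at hxy
    simp only [Set.mem_ofPred_eq, ne_eq, Sum.inl.injEq, Fin.ext_iff, Fin.val_one] at hy
    omega
  · exact ⟨.inr l', rfl⟩
  · simp only [comap_adj, Embedding.subtype_apply, coe_starPart_apply_inr, adj_inr_inl,
      Fin.val_eq_zero_iff] at hxy
    exact ⟨.inl .unit, Subtype.ext (by simp [hxy])⟩
  · simp at hxy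

theorem mem_range_pathPart_or_starPart
    (x : {v : Fin (t / 2 + 2) ⊕ Fin (t / 2 - 1) | v ≠ .inl 1}) :
    x ∈ Set.range (pathPart t) ∨ x ∈ Set.range (starPart t) := by
  obtain ⟨j | l, hx⟩ := x
  · simp only [Set.mem_ofPred_eq, ne_eq, Sum.inl.injEq, Fin.ext_iff, Fin.val_one] at hx
    rcases Nat.lt_or_ge j 2 with hj | hj
    · exact .inr ⟨.inl .unit, Subtype.ext (by
        simp only [coe_starPart_apply_inl, Sum.inl.injEq, Fin.ext_iff, Fin.val_zero]; omega)⟩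
    · exact .inl ⟨⟨j - 2, by omega⟩, Subtype.ext (by
        simp only [coe_pathPart_apply, Sum.inl.injEq, Fin.ext_iff]; omega)⟩
  · exact .inr ⟨.inr l, rfl⟩

theorem pathPart_ne_starPart (i : Fin (t / 2)) (w : PUnit ⊕ Fin (t / 2 - 1)) :
    pathPart t i ≠ starPart t w := by
  rcases w with _ | l <;> simp [Subtype.ext_iff, Fin.ext_iff]

theorem exists_path_and_star_components (ht : 2 ≤ t) :
    ∃ c₁ c₂ : ((starPathTree t).induce {v | v ≠ .inl 1}).ConnectedComponent,
      c₁ ≠ c₂ ∧ (∀ c, c = c₁ ∨ c = c₂) ∧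
      c₁.supp.ncard = t / 2 ∧ c₂.supp.ncard = t / 2 ∧
      Nonempty ((((starPathTree t).induce {v | v ≠ .inl 1}).induce c₁.supp) ≃g
        pathGraph (t / 2)) ∧
      Nonempty ((((starPathTree t).induce {v | v ≠ .inl 1}).induce c₂.supp) ≃g
        completeBipartiteGraph PUnit (Fin (t / 2 - 1))) := by
  obtain ⟨n, hn⟩ : ∃ n, t / 2 = n + 1 := ⟨t / 2 - 1, by omega⟩
  have hconn : (pathGraph (t / 2)).Connected := by rw [hn]; exact pathGraph_connected n
  obtain ⟨c₁, hc₁⟩ : ∃ c : ((starPathTree t).induce {v | v ≠ .inl 1}).ConnectedComponent,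
      c.supp = Set.range (pathPart t) :=
    hconn.exists_supp_eq_range (pathPart t).toHom range_pathPart_adj_closed
  obtain ⟨c₂, hc₂⟩ : ∃ c : ((starPathTree t).induce {v | v ≠ .inl 1}).ConnectedComponent,
      c.supp = Set.range (starPart t) :=
    completeBipartiteGraph_connected_of_unique.exists_supp_eq_range (starPart t).toHom
      range_starPart_adj_closed
  refine ⟨c₁, c₂, fun h => ?_, fun c => ?_, ?_, ?_, ?_, ?_⟩
  · obtain ⟨w, hw⟩ : pathPart t ⟨0, by omega⟩ ∈ Set.range (starPart t) := by
      rw [← hc₂, ← h, hc₁]; exact ⟨_, rfl⟩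
    exact pathPart_ne_starPart _ _ hw.symm
  · obtain ⟨x, hx⟩ := c.nonempty_supp
    rcases mem_range_pathPart_or_starPart x with h | h
    · rw [← hc₁] at h; exact .inl (hx.symm.trans h)
    · rw [← hc₂] at h; exact .inr (hx.symm.trans h)
  · rw [hc₁, Set.ncard_range_of_injective (pathPart t).injective, Nat.card_eq_fintype_card,
      Fintype.card_fin]
  · rw [hc₂, Set.ncard_range_of_injective (starPart t).injective]
    simp only [Nat.card_eq_fintype_card, Fintype.card_sum, Fintype.card_unique, Fintype.card_fin]
    omega
  · rw [hc₁]; exact ⟨(pathPart t).isoInduceRange.symm⟩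
  · rw [hc₂]; exact ⟨(starPart t).isoInduceRange.symm⟩

theorem le_max_ncard_of_coloring (ht4 : 4 ∣ t)
    (col : {v : Fin (t / 2 + 2) ⊕ Fin (t / 2 - 1) | v ≠ .inl 1} → Bool)
    (hcol : ∀ u v, ((starPathTree t).induce {v | v ≠ .inl 1}).Adj u v → col u ≠ col v) :
    3 * t / 4 - 1 ≤ max {u | col u = false}.ncard {u | col u = true}.ncard := by
  let C : ((starPathTree t).induce {v | v ≠ .inl 1}).Coloring Bool := Coloring.mk col (hcol _ _)
  let leaf : Fin (t / 2 - 1) → {v : Fin (t / 2 + 2) ⊕ Fin (t / 2 - 1) | v ≠ .inl 1} :=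
    fun l => ⟨.inr l, by simp⟩
  let b := !col ⟨.inl 0, by simp⟩
  let D : (pathGraph (t / 2)).Coloring Bool := C.comp (pathPart t).toHom
  have hD : 2 * (D.colorClass b).ncard = t / 2 :=
    two_mul_ncard_colorClass_pathGraph (by obtain ⟨k, rfl⟩ := ht4; exact ⟨k, by omega⟩) D b
  have hpath : pathPart t '' D.colorClass b ⊆ C.colorClass b := by
    rintro _ ⟨i, hi, rfl⟩; exact hi
  have hleaves : Set.range leaf ⊆ C.colorClass b := by
    rintro _ ⟨l, rfl⟩
    exact Bool.eq_not.mpr (hcol _ _ (by simp [leaf]))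
  have hdisj : Disjoint (pathPart t '' D.colorClass b) (Set.range leaf) := by
    rw [Set.disjoint_left]
    rintro _ ⟨i, -, rfl⟩ ⟨l, hl⟩
    simp [leaf, Subtype.ext_iff] at hl
  have hb : t / 2 - 1 + t / 4 ≤ (C.colorClass b).ncard := by
    calc t / 2 - 1 + t / 4 = (pathPart t '' D.colorClass b ∪ Set.range leaf).ncard := by
          rw [Set.ncard_union_eq hdisj, Set.ncard_image_of_injective _ (pathPart t).injective,
            Set.ncard_range_of_injective (fun l l' h => by simpa [leaf] using h),
            Nat.card_eq_fintype_card, Fintype.card_fin]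
          omega
      _ ≤ (C.colorClass b).ncard := Set.ncard_le_ncard (Set.union_subset hpath hleaves)
  cases hb' : b <;> rw [hb'] at hb
  · exact le_trans (by omega) (le_trans hb (le_max_left _ _))
  · exact le_trans (by omega) (le_trans hb (le_max_right _ _))

end starPathTree

/-- For `t ≥ 4` divisible by `4`, let `T` be the star-path tree and let `z` be any
vertex such that every component of `T − z` has at most `⌈t/2⌉ = t/2` vertices. Then
`z` is unique, `T − z` has exactly two components — a path on `t/2` vertices and a star
on `t/2` vertices — and every proper 2-colouring of `T − z` has a colour class with at
least `3t/4 − 1` vertices. -/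
theorem starPathTree_unbalanced (t : ℕ) (ht4 : 4 ∣ t) (ht : 4 ≤ t) :
    ∀ z : Fin (t / 2 + 2) ⊕ Fin (t / 2 - 1),
      (∀ c : ((starPathTree t).induce {v | v ≠ z}).ConnectedComponent,
        c.supp.ncard ≤ t / 2) →
      ((∀ z', (∀ c : ((starPathTree t).induce {v | v ≠ z'}).ConnectedComponent,
          c.supp.ncard ≤ t / 2) → z' = z) ∧
       (∃ c₁ c₂ : ((starPathTree t).induce {v | v ≠ z}).ConnectedComponent,
          c₁ ≠ c₂ ∧ (∀ c, c = c₁ ∨ c = c₂) ∧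
          c₁.supp.ncard = t / 2 ∧ c₂.supp.ncard = t / 2 ∧
          Nonempty ((((starPathTree t).induce {v | v ≠ z}).induce c₁.supp) ≃g
            SimpleGraph.pathGraph (t / 2)) ∧
          Nonempty ((((starPathTree t).induce {v | v ≠ z}).induce c₂.supp) ≃g
            completeBipartiteGraph PUnit (Fin (t / 2 - 1)))) ∧
       (∀ col : ({v | v ≠ z} : Set (Fin (t / 2 + 2) ⊕ Fin (t / 2 - 1))) → Bool,
          (∀ u v, ((starPathTree t).induce {v | v ≠ z}).Adj u v → col u ≠ col v) →
          3 * t / 4 - 1 ≤ max {u | col u = false}.ncard {u | col u = true}.ncard)) := by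
  intro z hz
  obtain rfl := starPathTree.eq_inl_one_of_forall_ncard_supp_le hz
  exact ⟨fun _ hz' => starPathTree.eq_inl_one_of_forall_ncard_supp_le hz',
    starPathTree.exists_path_and_star_components (by omega),
    starPathTree.le_max_ncard_of_coloring ht4⟩
end
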